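/- arXiv:2010.11652 — 9 statements merged into one kernel-verified Lean document; each statement's English description precedes it below -/
import Mathlib

section
/- Assume F is nonempty. A vector β* ∈ F minimizes the linear objective (1−γ)·Σ_{s,a} μ₀(s)·π(a|s)·βᵀφ(s,a) over β ∈ F if and only if β* minimizes the weighted ℓ¹ error Σ_{s,a} μ₀(s)·π(a|s)·|Q^π(s,a) − βᵀφ(s,a)| over β ∈ F. -/
open Finset

noncomputable section

/-- The Bellman operator `B_π` for policy `pol`. -/
def bellman {S A : Type*} [Fintype S] [Fintype A]
    (γ : ℝ) (r : S → A → ℝ) (T : S → A → S → ℝ) (pol : S → A → ℝ)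
    (Q : S → A → ℝ) : S → A → ℝ :=
  fun s a => r s a + γ * ∑ s', T s a s' * ∑ a', pol s' a' * Q s' a'

/-!
Every `β ∈ F` dominates `Q^π` pointwise: `g = Q^π − βᵀφ` satisfies `g ≤ γ · P_π g` for the
stochastic operator `P_π g (s, a) = Σ T(s'|s,a) π(a'|s') g(s', a')`, so at a maximum point of `g`
we get `max g ≤ γ · max g`, forcing `max g ≤ 0`. Hence on `F` the weighted ℓ¹ error equals
`Σ μ₀π·βᵀφ − Σ μ₀π·Q^π`, the linear objective divided by `1 − γ > 0` up to a constant.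
-/

theorem sum_mul_le_of_le {ι : Type*} [Fintype ι] {w f : ι → ℝ} {M : ℝ}
    (hw0 : ∀ i, 0 ≤ w i) (hw1 : ∑ i, w i = 1) (hf : ∀ i, f i ≤ M) :
    ∑ i, w i * f i ≤ M :=
  calc ∑ i, w i * f i ≤ ∑ i, w i * M :=
        sum_le_sum fun i _ => mul_le_mul_of_nonneg_left (hf i) (hw0 i)
    _ = M := by rw [← sum_mul, hw1, one_mul]

theorem sum_mul_abs_sub_of_le {ι : Type*} (s : Finset ι) (w f g : ι → ℝ)
    (h : ∀ i ∈ s, f i ≤ g i) :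
    ∑ i ∈ s, w i * |f i - g i| = ∑ i ∈ s, w i * g i - ∑ i ∈ s, w i * f i := by
  rw [← sum_sub_distrib]
  refine sum_congr rfl fun i hi => ?_
  rw [abs_of_nonpos (sub_nonpos.2 (h i hi))]
  ring

section Bellman

variable {S A : Type*} [Fintype S] [Fintype A] {γ : ℝ} {r : S → A → ℝ} {T : S → A → S → ℝ}
  {pol : S → A → ℝ}

theorem bellman_sub_bellman (Q Q' : S → A → ℝ) (s : S) (a : A) :
    bellman γ r T pol Q s a - bellman γ r T pol Q' s a =
      γ * ∑ s', T s a s' * ∑ a', pol s' a' * (Q s' a' - Q' s' a') := by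
  simp only [bellman, mul_sub, sum_sub_distrib]
  ring

theorem sum_transition_mul_sum_policy_mul_le (hT0 : ∀ s a s', 0 ≤ T s a s')
    (hT1 : ∀ s a, ∑ s', T s a s' = 1) (hpol0 : ∀ s a, 0 ≤ pol s a)
    (hpol1 : ∀ s, ∑ a, pol s a = 1) {g : S → A → ℝ} {M : ℝ} (hg : ∀ s a, g s a ≤ M)
    (s : S) (a : A) :
    ∑ s', T s a s' * ∑ a', pol s' a' * g s' a' ≤ M :=
  sum_mul_le_of_le (hT0 s a) (hT1 s a) fun s' =>
    sum_mul_le_of_le (hpol0 s') (hpol1 s') (hg s')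

theorem le_of_le_bellman_of_bellman_le (hγ0 : 0 ≤ γ) (hγ1 : γ < 1)
    (hT0 : ∀ s a s', 0 ≤ T s a s') (hT1 : ∀ s a, ∑ s', T s a s' = 1)
    (hpol0 : ∀ s a, 0 ≤ pol s a) (hpol1 : ∀ s, ∑ a, pol s a = 1) {Q V : S → A → ℝ}
    (hQ : ∀ s a, Q s a ≤ bellman γ r T pol Q s a)
    (hV : ∀ s a, bellman γ r T pol V s a ≤ V s a) (s : S) (a : A) :
    Q s a ≤ V s a := by
  by_contra! h
  obtain ⟨⟨s₀, a₀⟩, -, hmax⟩ := exists_max_image univ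
    (fun q : S × A => Q q.1 q.2 - V q.1 q.2) ⟨(s, a), mem_univ _⟩
  have hm : 0 < Q s₀ a₀ - V s₀ a₀ := (sub_pos.2 h).trans_le (hmax (s, a) (mem_univ _))
  have hmγ : Q s₀ a₀ - V s₀ a₀ ≤ γ * (Q s₀ a₀ - V s₀ a₀) :=
    calc Q s₀ a₀ - V s₀ a₀
        ≤ bellman γ r T pol Q s₀ a₀ - bellman γ r T pol V s₀ a₀ :=
          sub_le_sub (hQ s₀ a₀) (hV s₀ a₀)
      _ = γ * ∑ s', T s₀ a₀ s' * ∑ a', pol s' a' * (Q s' a' - V s' a') :=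
          bellman_sub_bellman Q V s₀ a₀
      _ ≤ γ * (Q s₀ a₀ - V s₀ a₀) :=
          mul_le_mul_of_nonneg_left (sum_transition_mul_sum_policy_mul_le hT0 hT1 hpol0 hpol1
            (fun s' a' => hmax (s', a') (mem_univ _)) s₀ a₀) hγ0
  nlinarith

end Bellman

theorem stmt_1_general {S A : Type*} [Fintype S] [Fintype A]
    {p : ℕ} (γ : ℝ) (hγ0 : 0 < γ) (hγ1 : γ < 1)
    (r : S → A → ℝ)
    (T : S → A → S → ℝ) (hT0 : ∀ s a s', 0 ≤ T s a s') (hT1 : ∀ s a, ∑ s', T s a s' = 1)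
    (pol : S → A → ℝ) (hpol0 : ∀ s a, 0 ≤ pol s a) (hpol1 : ∀ s, ∑ a, pol s a = 1)
    (μ0 : S → ℝ)
    (φ : S → A → Fin p → ℝ)
    (Qpi : S → A → ℝ) (hQpi : ∀ s a, Qpi s a = bellman γ r T pol Qpi s a)
    (F : Set (Fin p → ℝ))
    (hF : F = {β : Fin p → ℝ | ∀ s a,
      bellman γ r T pol (fun s' a' => ∑ i, β i * φ s' a' i) s a ≤ ∑ i, β i * φ s a i})
    (βstar : Fin p → ℝ) (hβstar : βstar ∈ F) :
    (∀ β ∈ F,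
        (1 - γ) * ∑ s, ∑ a, μ0 s * pol s a * ∑ i, βstar i * φ s a i ≤
        (1 - γ) * ∑ s, ∑ a, μ0 s * pol s a * ∑ i, β i * φ s a i) ↔
    (∀ β ∈ F,
        ∑ s, ∑ a, μ0 s * pol s a * |Qpi s a - ∑ i, βstar i * φ s a i| ≤
        ∑ s, ∑ a, μ0 s * pol s a * |Qpi s a - ∑ i, β i * φ s a i|) := by
  have hdom : ∀ β ∈ F, ∀ s a, Qpi s a ≤ ∑ i, β i * φ s a i := by
    intro β hβ
    rw [hF] at hβ
    exact le_of_le_bellman_of_bellman_le hγ0.le hγ1 hT0 hT1 hpol0 hpol1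
      (fun s a => (hQpi s a).le) hβ
  have herror : ∀ β ∈ F,
      ∑ s, ∑ a, μ0 s * pol s a * |Qpi s a - ∑ i, β i * φ s a i| =
        ∑ s, ∑ a, μ0 s * pol s a * ∑ i, β i * φ s a i -
          ∑ s, ∑ a, μ0 s * pol s a * Qpi s a := by
    intro β hβ
    rw [← sum_sub_distrib]
    exact sum_congr rfl fun s _ =>
      sum_mul_abs_sub_of_le _ _ _ _ fun a _ => hdom β hβ s a
  refine forall₂_congr fun β hβ => ?_
  rw [herror β hβ, herror βstar hβstar, mul_le_mul_iff_right₀ (sub_pos.2 hγ1),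
    sub_le_sub_iff_right]

/-- over the feasible set `F = {β : βᵀφ ≥ B_π(βᵀφ)}`, minimizing the
linear objective `(1−γ)·Σ μ₀π·βᵀφ` is equivalent to minimizing the weighted ℓ¹ error
`Σ μ₀π·|Q^π − βᵀφ|`. -/
theorem stmt_1 {S A : Type*} [Fintype S] [Fintype A] [Nonempty S] [Nonempty A]
    {p : ℕ} (γ Rmax : ℝ) (hγ0 : 0 < γ) (hγ1 : γ < 1) (hR : 0 < Rmax)
    (r : S → A → ℝ) (hr : ∀ s a, r s a ∈ Set.Icc (0 : ℝ) Rmax)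
    (T : S → A → S → ℝ) (hT0 : ∀ s a s', 0 ≤ T s a s') (hT1 : ∀ s a, ∑ s', T s a s' = 1)
    (pol : S → A → ℝ) (hpol0 : ∀ s a, 0 ≤ pol s a) (hpol1 : ∀ s, ∑ a, pol s a = 1)
    (μ0 : S → ℝ) (hμ00 : ∀ s, 0 ≤ μ0 s) (hμ01 : ∑ s, μ0 s = 1)
    (φ : S → A → Fin p → ℝ)
    (Qpi : S → A → ℝ) (hQpi : ∀ s a, Qpi s a = bellman γ r T pol Qpi s a)
    (F : Set (Fin p → ℝ))
    (hF : F = {β : Fin p → ℝ | ∀ s a,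
      bellman γ r T pol (fun s' a' => ∑ i, β i * φ s' a' i) s a ≤ ∑ i, β i * φ s a i})
    (hFne : F.Nonempty)
    (βstar : Fin p → ℝ) (hβstar : βstar ∈ F) :
    (∀ β ∈ F,
        (1 - γ) * ∑ s, ∑ a, μ0 s * pol s a * ∑ i, βstar i * φ s a i ≤
        (1 - γ) * ∑ s, ∑ a, μ0 s * pol s a * ∑ i, β i * φ s a i) ↔
    (∀ β ∈ F,
        ∑ s, ∑ a, μ0 s * pol s a * |Qpi s a - ∑ i, βstar i * φ s a i| ≤
        ∑ s, ∑ a, μ0 s * pol s a * |Qpi s a - ∑ i, β i * φ s a i|) :=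
  stmt_1_general γ hγ0 hγ1 r T hT0 hT1 pol hpol0 hpol1 μ0 φ Qpi hQpi F hF βstar hβstar
end
end

section
/- Let ν : S×A → ℝ and ε ≥ 0 satisfy |ν(s,a) − Q^π(s,a)| ≤ ε for all (s,a) ∈ S×A. Then the function ν̄ defined by ν̄(s,a) = ν(s,a) + ((1+γ)/(1−γ))·ε satisfies ν̄(s,a) ≥ (B_π ν̄)(s,a) for all (s,a) ∈ S×A. -/
/-!
`B_π` shifts a constant `k` to `γ k`, since the rows of `T` and `π` sum to `1`, and it is monotone,
since `γ`, `T` and `π` are nonnegative. With `c = (1 + γ)/(1 - γ)` this gives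
`B_π ν̄ = B_π ν + γcε ≤ B_π (Q^π + ε) + γcε = Q^π + γε + γcε ≤ ν + (1 + γ + γc)ε = ν + cε`,
and `c` is precisely the solution of `1 + γ + γc = c`.
-/

open Finset

noncomputable section

section Bellman

variable {S A : Type*} [Fintype S] [Fintype A] {γ : ℝ} {r : S → A → ℝ} {T : S → A → S → ℝ}
  {pol : S → A → ℝ}

theorem bellman_add_const (hT1 : ∀ s a, ∑ s', T s a s' = 1) (hpol1 : ∀ s, ∑ a, pol s a = 1)
    (Q : S → A → ℝ) (k : ℝ) (s : S) (a : A) :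
    bellman γ r T pol (fun s' a' => Q s' a' + k) s a = bellman γ r T pol Q s a + γ * k := by
  simp only [bellman, mul_add, sum_add_distrib, ← sum_mul, hpol1, one_mul, hT1, add_assoc]

theorem bellman_mono (hγ : 0 ≤ γ) (hT0 : ∀ s a s', 0 ≤ T s a s') (hpol0 : ∀ s a, 0 ≤ pol s a)
    {Q Q' : S → A → ℝ} (hQ : ∀ s a, Q s a ≤ Q' s a) (s : S) (a : A) :
    bellman γ r T pol Q s a ≤ bellman γ r T pol Q' s a := by
  unfold bellman
  gcongr with s' _ a' _
  · exact hT0 s a s'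
  · exact hpol0 s' a'
  · exact hQ s' a'

end Bellman

theorem stmt_3_general {S A : Type*} [Fintype S] [Fintype A]
    (γ : ℝ) (hγ0 : 0 < γ) (hγ1 : γ < 1)
    (r : S → A → ℝ)
    (T : S → A → S → ℝ) (hT0 : ∀ s a s', 0 ≤ T s a s') (hT1 : ∀ s a, ∑ s', T s a s' = 1)
    (pol : S → A → ℝ) (hpol0 : ∀ s a, 0 ≤ pol s a) (hpol1 : ∀ s, ∑ a, pol s a = 1)
    (Qpi : S → A → ℝ) (hQpi : ∀ s a, Qpi s a = bellman γ r T pol Qpi s a)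
    (ν : S → A → ℝ) (ε : ℝ)
    (hν : ∀ s a, |ν s a - Qpi s a| ≤ ε) :
    ∀ s a,
      bellman γ r T pol (fun s' a' => ν s' a' + ((1 + γ) / (1 - γ)) * ε) s a ≤
        ν s a + ((1 + γ) / (1 - γ)) * ε := by
  intro s a
  set c := (1 + γ) / (1 - γ)
  have hc : ε + γ * ε + γ * (c * ε) = c * ε := by
    linear_combination (-ε) * div_mul_cancel₀ (1 + γ) (sub_pos.mpr hγ1).ne'
  have hν_le (s : S) (a : A) : ν s a ≤ Qpi s a + ε := by linarith [(abs_sub_le_iff.mp (hν s a)).1]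
  have hQpi_le : Qpi s a ≤ ν s a + ε := by linarith [(abs_sub_le_iff.mp (hν s a)).2]
  calc bellman γ r T pol (fun s' a' => ν s' a' + c * ε) s a
      = bellman γ r T pol ν s a + γ * (c * ε) := bellman_add_const hT1 hpol1 ν _ s a
    _ ≤ bellman γ r T pol (fun s' a' => Qpi s' a' + ε) s a + γ * (c * ε) := by
        gcongr
        exact bellman_mono hγ0.le hT0 hpol0 hν_le s a
    _ = Qpi s a + γ * ε + γ * (c * ε) := by rw [bellman_add_const hT1 hpol1, ← hQpi]
    _ ≤ ν s a + c * ε := by linarith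

/-- if `|ν − Q^π| ≤ ε` pointwise, then `ν̄ = ν + (1+γ)/(1−γ)·ε`
satisfies `ν̄ ≥ B_π ν̄` pointwise. -/
theorem stmt_3 {S A : Type*} [Fintype S] [Fintype A] [Nonempty S] [Nonempty A]
    (γ Rmax : ℝ) (hγ0 : 0 < γ) (hγ1 : γ < 1) (hR : 0 < Rmax)
    (r : S → A → ℝ) (hr : ∀ s a, r s a ∈ Set.Icc (0 : ℝ) Rmax)
    (T : S → A → S → ℝ) (hT0 : ∀ s a s', 0 ≤ T s a s') (hT1 : ∀ s a, ∑ s', T s a s' = 1)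
    (pol : S → A → ℝ) (hpol0 : ∀ s a, 0 ≤ pol s a) (hpol1 : ∀ s, ∑ a, pol s a = 1)
    (Qpi : S → A → ℝ) (hQpi : ∀ s a, Qpi s a = bellman γ r T pol Qpi s a)
    (ν : S → A → ℝ) (ε : ℝ) (hε : 0 ≤ ε)
    (hν : ∀ s a, |ν s a - Qpi s a| ≤ ε) :
    ∀ s a,
      bellman γ r T pol (fun s' a' => ν s' a' + ((1 + γ) / (1 - γ)) * ε) s a ≤
        ν s a + ((1 + γ) / (1 - γ)) * ε :=
  stmt_3_general γ hγ0 hγ1 r T hT0 hT1 pol hpol0 hpol1 Qpi hQpi ν ε hν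
end
end

section
/- Suppose p = |S|·|A| and the family of vectors {φ(s,a)}_{(s,a)∈S×A} is linearly independent in ℝ^p (i.e., the feature matrix is full rank). Then ρ̃_π = ρ_π. -/
open Finset

noncomputable section

/-- The embedded dual LP value `ρ̃_π`. -/
def rhoTilde {S A : Type*} [Fintype S] [Fintype A] {p : ℕ}
    (γ : ℝ) (r : S → A → ℝ) (T : S → A → S → ℝ) (pol : S → A → ℝ)
    (μ0 : S → ℝ) (φ : S → A → Fin p → ℝ) : ℝ :=
  sSup {x : ℝ | ∃ d : S → A → ℝ, (∀ s a, 0 ≤ d s a) ∧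
    (∀ i, ∑ s, ∑ a, d s a * φ s a i =
      (1 - γ) * (∑ s, ∑ a, μ0 s * pol s a * φ s a i) +
      γ * ∑ s, ∑ a, (pol s a * ∑ t1, ∑ t2, T t1 t2 s * d t1 t2) * φ s a i) ∧
    x = ∑ s, ∑ a, d s a * r s a}


section aux2
set_option linter.unusedSectionVars false
variable {S A : Type*} [Fintype S] [Fintype A] [Nonempty S] [Nonempty A]

def Pop (T : S → A → S → ℝ) (pol : S → A → ℝ) (Q : S × A → ℝ) : S × A → ℝ :=
  fun sa => ∑ s', T sa.1 sa.2 s' * ∑ a', pol s' a' * Q (s', a')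

def Pstar (T : S → A → S → ℝ) (pol : S → A → ℝ) (d : S × A → ℝ) : S × A → ℝ :=
  fun sa => pol sa.1 sa.2 * ∑ t : S × A, T t.1 t.2 sa.1 * d t

lemma Pop_add (T : S → A → S → ℝ) (pol : S → A → ℝ) (x y : S × A → ℝ) (sa : S × A) :
    Pop T pol (x + y) sa = Pop T pol x sa + Pop T pol y sa := by
  simp only [Pop, Pi.add_apply, mul_add, Finset.sum_add_distrib]

lemma Pop_smul (T : S → A → S → ℝ) (pol : S → A → ℝ) (c : ℝ) (x : S × A → ℝ) (sa : S × A) :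
    Pop T pol (c • x) sa = c * Pop T pol x sa := by
  simp only [Pop, Pi.smul_apply, smul_eq_mul]
  rw [Finset.mul_sum]
  refine Finset.sum_congr rfl fun s' _ => ?_
  have h : ∑ a', pol s' a' * (c * x (s', a')) = c * ∑ a', pol s' a' * x (s', a') := by
    rw [Finset.mul_sum]; exact Finset.sum_congr rfl fun a' _ => by ring
  rw [h]; ring

lemma Pstar_add (T : S → A → S → ℝ) (pol : S → A → ℝ) (x y : S × A → ℝ) (sa : S × A) :
    Pstar T pol (x + y) sa = Pstar T pol x sa + Pstar T pol y sa := by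
  simp only [Pstar, Pi.add_apply, mul_add, Finset.sum_add_distrib]

lemma Pstar_smul (T : S → A → S → ℝ) (pol : S → A → ℝ) (c : ℝ) (x : S × A → ℝ) (sa : S × A) :
    Pstar T pol (c • x) sa = c * Pstar T pol x sa := by
  simp only [Pstar, Pi.smul_apply, smul_eq_mul]
  have h : ∑ t : S × A, T t.1 t.2 sa.1 * (c * x t) = c * ∑ t : S × A, T t.1 t.2 sa.1 * x t := by
    rw [Finset.mul_sum]; exact Finset.sum_congr rfl fun t _ => by ring
  rw [h]; ring

def PopL (γ : ℝ) (T : S → A → S → ℝ) (pol : S → A → ℝ) :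
    ((S × A) → ℝ) →ₗ[ℝ] ((S × A) → ℝ) where
  toFun Q := fun sa => Q sa - γ * Pop T pol Q sa
  map_add' x y := by funext sa; rw [Pop_add]; simp only [Pi.add_apply]; ring
  map_smul' c x := by
    funext sa
    simp only [Pi.smul_apply, smul_eq_mul, RingHom.id_apply]
    rw [Pop_smul]
    ring

def PstarL (γ : ℝ) (T : S → A → S → ℝ) (pol : S → A → ℝ) :
    ((S × A) → ℝ) →ₗ[ℝ] ((S × A) → ℝ) where
  toFun d := fun sa => d sa - γ * Pstar T pol d sa
  map_add' x y := by funext sa; rw [Pstar_add]; simp only [Pi.add_apply]; ring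
  map_smul' c x := by
    funext sa
    simp only [Pi.smul_apply, smul_eq_mul, RingHom.id_apply]
    rw [Pstar_smul]
    ring

lemma PopL_inj (γ : ℝ) (hγ0 : 0 < γ) (hγ1 : γ < 1) (T : S → A → S → ℝ)
    (hT0 : ∀ s a s', 0 ≤ T s a s') (hT1 : ∀ s a, ∑ s', T s a s' = 1)
    (pol : S → A → ℝ) (hpol0 : ∀ s a, 0 ≤ pol s a) (hpol1 : ∀ s, ∑ a, pol s a = 1) :
    Function.Injective (PopL γ T pol (S := S) (A := A)) := by
  rw [injective_iff_map_eq_zero]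
  intro Q hQ
  have hfix : ∀ sa : S × A, Q sa = γ * Pop T pol Q sa := by
    intro sa
    have := congrFun hQ sa
    simp only [PopL, LinearMap.coe_mk, AddHom.coe_mk, Pi.zero_apply] at this
    linarith
  obtain ⟨sa0, -, hmax⟩ := Finset.exists_max_image Finset.univ (fun sa : S × A => |Q sa|)
    ⟨Classical.arbitrary (S × A), Finset.mem_univ _⟩
  set M := |Q sa0| with hM
  have hMnn : 0 ≤ M := abs_nonneg _
  have hbound : M ≤ γ * M := by
    calc M = |Q sa0| := rfl
    _ = γ * |Pop T pol Q sa0| := by rw [hfix sa0, abs_mul, abs_of_pos hγ0]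
    _ ≤ γ * M := by
        refine mul_le_mul_of_nonneg_left ?_ hγ0.le
        calc |Pop T pol Q sa0| ≤ ∑ s', |T sa0.1 sa0.2 s' * ∑ a', pol s' a' * Q (s', a')| :=
              Finset.abs_sum_le_sum_abs _ _
        _ ≤ ∑ s', T sa0.1 sa0.2 s' * M := by
            refine Finset.sum_le_sum fun s' _ => ?_
            rw [abs_mul, abs_of_nonneg (hT0 _ _ _)]
            refine mul_le_mul_of_nonneg_left ?_ (hT0 _ _ _)
            calc |∑ a', pol s' a' * Q (s', a')| ≤ ∑ a', |pol s' a' * Q (s', a')| :=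
                  Finset.abs_sum_le_sum_abs _ _
            _ ≤ ∑ a', pol s' a' * M := by
                refine Finset.sum_le_sum fun a' _ => ?_
                rw [abs_mul, abs_of_nonneg (hpol0 _ _)]
                exact mul_le_mul_of_nonneg_left (hmax _ (Finset.mem_univ _)) (hpol0 _ _)
            _ = M := by rw [← Finset.sum_mul, hpol1, one_mul]
        _ = M := by rw [← Finset.sum_mul, hT1, one_mul]
  have hM0 : M = 0 := le_antisymm (by nlinarith) hMnn
  funext sa
  show Q sa = 0
  have h1 : |Q sa| ≤ 0 := hM0 ▸ hmax sa (Finset.mem_univ _)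
  exact abs_eq_zero.mp (le_antisymm h1 (abs_nonneg _))

lemma PstarL_inj (γ : ℝ) (hγ0 : 0 < γ) (hγ1 : γ < 1) (T : S → A → S → ℝ)
    (hT0 : ∀ s a s', 0 ≤ T s a s') (hT1 : ∀ s a, ∑ s', T s a s' = 1)
    (pol : S → A → ℝ) (hpol0 : ∀ s a, 0 ≤ pol s a) (hpol1 : ∀ s, ∑ a, pol s a = 1) :
    Function.Injective (PstarL γ T pol (S := S) (A := A)) := by
  rw [injective_iff_map_eq_zero]
  intro e he
  have hfix : ∀ sa : S × A, e sa = γ * Pstar T pol e sa := by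
    intro sa
    have := congrFun he sa
    simp only [PstarL, LinearMap.coe_mk, AddHom.coe_mk, Pi.zero_apply] at this
    linarith
  have hsum : ∑ sa : S × A, |e sa| ≤ γ * ∑ sa : S × A, |e sa| := by
    calc ∑ sa : S × A, |e sa| = ∑ sa : S × A, γ * |Pstar T pol e sa| := by
          refine Finset.sum_congr rfl fun sa _ => ?_
          rw [hfix sa, abs_mul, abs_of_pos hγ0]
    _ ≤ ∑ sa : S × A, γ * (pol sa.1 sa.2 * ∑ t : S × A, T t.1 t.2 sa.1 * |e t|) := by
          refine Finset.sum_le_sum fun sa _ => ?_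
          refine mul_le_mul_of_nonneg_left ?_ hγ0.le
          unfold Pstar
          rw [abs_mul, abs_of_nonneg (hpol0 _ _)]
          refine mul_le_mul_of_nonneg_left ?_ (hpol0 _ _)
          calc |∑ t : S × A, T t.1 t.2 sa.1 * e t| ≤ ∑ t : S × A, |T t.1 t.2 sa.1 * e t| :=
                Finset.abs_sum_le_sum_abs _ _
          _ = ∑ t : S × A, T t.1 t.2 sa.1 * |e t| := by
                refine Finset.sum_congr rfl fun t _ => ?_
                rw [abs_mul, abs_of_nonneg (hT0 _ _ _)]
    _ = γ * ∑ t : S × A, |e t| := by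
          rw [← Finset.mul_sum]
          congr 1
          have expand : ∀ sa : S × A,
              pol sa.1 sa.2 * ∑ t : S × A, T t.1 t.2 sa.1 * |e t|
              = ∑ t : S × A, pol sa.1 sa.2 * (T t.1 t.2 sa.1 * |e t|) := by
            intro sa; rw [Finset.mul_sum]
          simp only [expand]
          rw [Finset.sum_comm]
          refine Finset.sum_congr rfl fun t _ => ?_
          rw [Fintype.sum_prod_type]
          have h1 : ∀ s : S, ∑ a : A, pol s a * (T t.1 t.2 s * |e t|)
              = T t.1 t.2 s * |e t| := by
            intro s; rw [← Finset.sum_mul, hpol1, one_mul]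
          simp only [h1]
          rw [← Finset.sum_mul, hT1, one_mul]
  have hnn : (0:ℝ) ≤ ∑ sa : S × A, |e sa| := Finset.sum_nonneg fun _ _ => abs_nonneg _
  have hz : ∑ sa : S × A, |e sa| = 0 := le_antisymm (by nlinarith) hnn
  funext sa
  show e sa = 0
  have := (Finset.sum_eq_zero_iff_of_nonneg (fun _ _ => abs_nonneg (e _))).mp hz sa
    (Finset.mem_univ _)
  exact abs_eq_zero.mp this



/-- A Bellman fixed point with nonnegative reward is nonnegative. -/
lemma Q_nonneg (γ : ℝ) (hγ0 : 0 < γ) (hγ1 : γ < 1) (T : S → A → S → ℝ)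
    (hT0 : ∀ s a s', 0 ≤ T s a s') (hT1 : ∀ s a, ∑ s', T s a s' = 1)
    (pol : S → A → ℝ) (hpol0 : ∀ s a, 0 ≤ pol s a) (hpol1 : ∀ s, ∑ a, pol s a = 1)
    (c Q : S × A → ℝ) (hc : ∀ sa, 0 ≤ c sa)
    (hQ : ∀ sa, Q sa = c sa + γ * Pop T pol Q sa) :
    ∀ sa, 0 ≤ Q sa := by
  obtain ⟨sa0, -, hmin⟩ := Finset.exists_min_image Finset.univ (fun sa : S × A => Q sa)
    ⟨Classical.arbitrary (S × A), Finset.mem_univ _⟩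
  set m := Q sa0 with hm
  have hbound : γ * m ≤ m := by
    have hP : m ≤ Pop T pol Q sa0 → True := fun _ => trivial
    have h2 : γ * m ≤ γ * Pop T pol Q sa0 := by
      refine mul_le_mul_of_nonneg_left ?_ hγ0.le
      calc m = ∑ s', T sa0.1 sa0.2 s' * m := by rw [← Finset.sum_mul, hT1, one_mul]
      _ ≤ ∑ s', T sa0.1 sa0.2 s' * ∑ a', pol s' a' * Q (s', a') := by
          refine Finset.sum_le_sum fun s' _ => ?_
          refine mul_le_mul_of_nonneg_left ?_ (hT0 _ _ _)
          calc m = ∑ a', pol s' a' * m := by rw [← Finset.sum_mul, hpol1, one_mul]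
          _ ≤ ∑ a', pol s' a' * Q (s', a') := by
              refine Finset.sum_le_sum fun a' _ => ?_
              exact mul_le_mul_of_nonneg_left (hmin _ (Finset.mem_univ _)) (hpol0 _ _)
    calc γ * m ≤ γ * Pop T pol Q sa0 := h2
    _ ≤ c sa0 + γ * Pop T pol Q sa0 := le_add_of_nonneg_left (hc _)
    _ = m := (hQ sa0).symm
  have hm0 : 0 ≤ m := by nlinarith
  exact fun sa => le_trans hm0 (hmin sa (Finset.mem_univ _))

lemma adj (T : S → A → S → ℝ) (pol : S → A → ℝ) (d Q : S × A → ℝ) :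
    ∑ sa : S × A, d sa * Pop T pol Q sa = ∑ sa : S × A, Pstar T pol d sa * Q sa := by
  have L : ∀ sa : S × A, d sa * Pop T pol Q sa
      = ∑ sb : S × A, d sa * (T sa.1 sa.2 sb.1 * (pol sb.1 sb.2 * Q sb)) := by
    intro sa
    simp only [Pop, Fintype.sum_prod_type, Finset.mul_sum]
  have R : ∀ sb : S × A, Pstar T pol d sb * Q sb
      = ∑ sa : S × A, d sa * (T sa.1 sa.2 sb.1 * (pol sb.1 sb.2 * Q sb)) := by
    intro sb
    simp only [Pstar, Finset.sum_mul, Finset.mul_sum]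
    exact Finset.sum_congr rfl fun sa _ => by ring
  simp only [L, R]
  exact Finset.sum_comm

/-- Key identity: for any dual fixed point `d` and primal fixed point `Q` with reward `c`. -/
lemma key_identity (γ : ℝ) (T : S → A → S → ℝ) (pol : S → A → ℝ) (μπ : S × A → ℝ)
    (d Q c : S × A → ℝ)
    (hd : ∀ sa, d sa = (1 - γ) * μπ sa + γ * Pstar T pol d sa)
    (hQ : ∀ sa, Q sa = c sa + γ * Pop T pol Q sa) :
    ∑ sa : S × A, d sa * c sa = (1 - γ) * ∑ sa : S × A, μπ sa * Q sa := by
  have h1 : ∑ sa : S × A, d sa * c sa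
      = ∑ sa : S × A, d sa * Q sa - γ * ∑ sa : S × A, d sa * Pop T pol Q sa := by
    rw [Finset.mul_sum, ← Finset.sum_sub_distrib]
    exact Finset.sum_congr rfl fun sa _ => by rw [hQ sa]; ring
  have h2 : ∑ sa : S × A, d sa * Q sa
      = (1 - γ) * ∑ sa : S × A, μπ sa * Q sa + γ * ∑ sa : S × A, Pstar T pol d sa * Q sa := by
    rw [Finset.mul_sum, Finset.mul_sum, ← Finset.sum_add_distrib]
    exact Finset.sum_congr rfl fun sa _ => by rw [hd sa]; ring
  rw [h1, h2, adj]
  ring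


end aux2


/-- with `p = |S|·|A|` and a full-rank (linearly independent) family of
feature vectors, the embedded dual LP value equals the policy value: `ρ̃_π = ρ_π`. -/
theorem stmt_4 {S A : Type*} [Fintype S] [Fintype A] [Nonempty S] [Nonempty A]
    {p : ℕ} (γ Rmax : ℝ) (hγ0 : 0 < γ) (hγ1 : γ < 1) (hR : 0 < Rmax)
    (r : S → A → ℝ) (hr : ∀ s a, r s a ∈ Set.Icc (0 : ℝ) Rmax)
    (T : S → A → S → ℝ) (hT0 : ∀ s a s', 0 ≤ T s a s') (hT1 : ∀ s a, ∑ s', T s a s' = 1)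
    (pol : S → A → ℝ) (hpol0 : ∀ s a, 0 ≤ pol s a) (hpol1 : ∀ s, ∑ a, pol s a = 1)
    (μ0 : S → ℝ) (hμ00 : ∀ s, 0 ≤ μ0 s) (hμ01 : ∑ s, μ0 s = 1)
    (φ : S → A → Fin p → ℝ)
    (Qpi : S → A → ℝ) (hQpi : ∀ s a, Qpi s a = bellman γ r T pol Qpi s a)
    (hp : p = Fintype.card S * Fintype.card A)
    (hli : LinearIndependent ℝ (fun sa : S × A => φ sa.1 sa.2)) :
    rhoTilde γ r T pol μ0 φ = (1 - γ) * ∑ s, ∑ a, μ0 s * pol s a * Qpi s a := by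
  classical
  set μπ : S × A → ℝ := fun sa => μ0 sa.1 * pol sa.1 sa.2 with hμπ
  have hsurjP : Function.Surjective (PstarL γ T pol (S := S) (A := A)) :=
    LinearMap.injective_iff_surjective.mp (PstarL_inj γ hγ0 hγ1 T hT0 hT1 pol hpol0 hpol1)
  have hsurjQ : Function.Surjective (PopL γ T pol (S := S) (A := A)) :=
    LinearMap.injective_iff_surjective.mp (PopL_inj γ hγ0 hγ1 T hT0 hT1 pol hpol0 hpol1)
  obtain ⟨dstar, hdstar⟩ := hsurjP (fun sa => (1 - γ) * μπ sa)
  have hdfix : ∀ sa, dstar sa = (1 - γ) * μπ sa + γ * Pstar T pol dstar sa := by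
    intro sa
    have h := congrFun hdstar sa
    simp only [PstarL, LinearMap.coe_mk, AddHom.coe_mk] at h
    linarith
  -- nonnegativity of dstar
  have hdnn : ∀ sa : S × A, 0 ≤ dstar sa := by
    intro sa0
    obtain ⟨Qc, hQc⟩ := hsurjQ (fun sa => if sa = sa0 then (1 : ℝ) else 0)
    have hQcfix : ∀ sa, Qc sa = (if sa = sa0 then (1 : ℝ) else 0) + γ * Pop T pol Qc sa := by
      intro sa
      have h := congrFun hQc sa
      simp only [PopL, LinearMap.coe_mk, AddHom.coe_mk] at h
      linarith
    have hQcnn := Q_nonneg γ hγ0 hγ1 T hT0 hT1 pol hpol0 hpol1 _ Qc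
      (fun sa => by split <;> norm_num) hQcfix
    have hkey := key_identity γ T pol μπ dstar Qc _ hdfix hQcfix
    have hL : ∑ sa : S × A, dstar sa * (if sa = sa0 then (1 : ℝ) else 0) = dstar sa0 := by
      simp [mul_ite, mul_one, mul_zero]
    rw [hL] at hkey
    rw [hkey]
    have hnn : 0 ≤ ∑ sa : S × A, μπ sa * Qc sa :=
      Finset.sum_nonneg fun sa _ =>
        mul_nonneg (mul_nonneg (hμ00 _) (hpol0 _ _)) (hQcnn sa)
    nlinarith
  -- Qpi as fixed point
  set Qu : S × A → ℝ := fun sa => Qpi sa.1 sa.2 with hQu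
  have hQufix : ∀ sa : S × A, Qu sa = r sa.1 sa.2 + γ * Pop T pol Qu sa := by
    intro sa
    have h := hQpi sa.1 sa.2
    simpa [bellman, Pop, hQu] using h
  -- conversion helpers
  have hconv : ∀ f : S → A → ℝ, ∑ sa : S × A, f sa.1 sa.2 = ∑ s, ∑ a, f s a := by
    intro f; rw [Fintype.sum_prod_type]
  have hPs : ∀ (i : Fin p) (d : S → A → ℝ),
      ∑ sa : S × A, Pstar T pol (fun t => d t.1 t.2) sa * φ sa.1 sa.2 i
      = ∑ s, ∑ a, (pol s a * ∑ t1, ∑ t2, T t1 t2 s * d t1 t2) * φ s a i := by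
    intro i d
    rw [Fintype.sum_prod_type]
    refine Finset.sum_congr rfl fun s _ => Finset.sum_congr rfl fun a _ => ?_
    simp only [Pstar]
    rw [Fintype.sum_prod_type]
  set v : ℝ := ∑ s, ∑ a, dstar (s, a) * r s a with hv
  have hvalt : v = ∑ sa : S × A, dstar sa * r sa.1 sa.2 := by
    rw [hv, ← hconv (fun s a => dstar (s, a) * r s a)]
  -- the feasible set is the singleton {v}
  have hset : {x : ℝ | ∃ d : S → A → ℝ, (∀ s a, 0 ≤ d s a) ∧
      (∀ i, ∑ s, ∑ a, d s a * φ s a i =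
        (1 - γ) * (∑ s, ∑ a, μ0 s * pol s a * φ s a i) +
        γ * ∑ s, ∑ a, (pol s a * ∑ t1, ∑ t2, T t1 t2 s * d t1 t2) * φ s a i) ∧
      x = ∑ s, ∑ a, d s a * r s a} = {v} := by
    apply Set.eq_singleton_iff_unique_mem.mpr
    constructor
    · -- membership: dstar is feasible
      refine ⟨fun s a => dstar (s, a), fun s a => hdnn (s, a), ?_, rfl⟩
      intro i
      have h1 : ∑ s, ∑ a, dstar (s, a) * φ s a i
          = ∑ sa : S × A, dstar sa * φ sa.1 sa.2 i :=
        (hconv (fun s a => dstar (s, a) * φ s a i)).symm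
      have h2 : ∑ s, ∑ a, μ0 s * pol s a * φ s a i
          = ∑ sa : S × A, μπ sa * φ sa.1 sa.2 i :=
        (hconv (fun s a => μ0 s * pol s a * φ s a i)).symm
      have h3 := hPs i (fun s a => dstar (s, a))
      rw [h1, h2, ← h3]
      rw [Finset.mul_sum, Finset.mul_sum, ← Finset.sum_add_distrib]
      refine Finset.sum_congr rfl fun sa _ => ?_
      have hps : Pstar T pol (fun t => dstar (t.1, t.2)) sa = Pstar T pol dstar sa := by
        simp only [Pstar]
      rw [hps, hdfix sa]
      ring
    · -- uniqueness
      rintro x ⟨d, hd0, hdc, hdx⟩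
      set e : S × A → ℝ := fun sa => d sa.1 sa.2 with he
      have hg : ∀ i, ∑ sa : S × A,
          (e sa - ((1 - γ) * μπ sa + γ * Pstar T pol e sa)) * φ sa.1 sa.2 i = 0 := by
        intro i
        have expand : ∑ sa : S × A,
            (e sa - ((1 - γ) * μπ sa + γ * Pstar T pol e sa)) * φ sa.1 sa.2 i
            = (∑ sa : S × A, e sa * φ sa.1 sa.2 i)
              - ((1 - γ) * (∑ sa : S × A, μπ sa * φ sa.1 sa.2 i)
                + γ * ∑ sa : S × A, Pstar T pol e sa * φ sa.1 sa.2 i) := by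
          rw [Finset.mul_sum, Finset.mul_sum, ← Finset.sum_add_distrib,
            ← Finset.sum_sub_distrib]
          exact Finset.sum_congr rfl fun sa _ => by ring
        have h1 : ∑ sa : S × A, e sa * φ sa.1 sa.2 i = ∑ s, ∑ a, d s a * φ s a i :=
          hconv (fun s a => d s a * φ s a i)
        have h2 : ∑ sa : S × A, μπ sa * φ sa.1 sa.2 i
            = ∑ s, ∑ a, μ0 s * pol s a * φ s a i :=
          hconv (fun s a => μ0 s * pol s a * φ s a i)
        have h3 : ∑ sa : S × A, Pstar T pol e sa * φ sa.1 sa.2 i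
            = ∑ s, ∑ a, (pol s a * ∑ t1, ∑ t2, T t1 t2 s * d t1 t2) * φ s a i :=
          hPs i d
        rw [expand, h1, h2, h3, hdc i]
        ring
      have hzero : ∀ sa : S × A,
          e sa - ((1 - γ) * μπ sa + γ * Pstar T pol e sa) = 0 := by
        intro sa
        refine Fintype.linearIndependent_iff.mp hli
          (fun sa => e sa - ((1 - γ) * μπ sa + γ * Pstar T pol e sa)) ?_ sa
        funext i
        rw [Finset.sum_apply]
        simp only [Pi.smul_apply, smul_eq_mul, Pi.zero_apply]
        exact hg i
      have hed : e = dstar := by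
        apply PstarL_inj γ hγ0 hγ1 T hT0 hT1 pol hpol0 hpol1
        funext sa
        simp only [PstarL, LinearMap.coe_mk, AddHom.coe_mk]
        have h1 := hzero sa
        have h2 := hdfix sa
        linarith
      rw [hdx, hv]
      refine Finset.sum_congr rfl fun s _ => Finset.sum_congr rfl fun a _ => ?_
      have : d s a = dstar (s, a) := congrFun hed (s, a)
      rw [this]
  -- conclude
  rw [rhoTilde, hset, csSup_singleton]
  have hfinal := key_identity γ T pol μπ dstar Qu (fun sa => r sa.1 sa.2) hdfix hQufix
  rw [hvalt, hfinal]
  congr 1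
  exact hconv (fun s a => μ0 s * pol s a * Qpi s a)
end
end

section
/- The following minimax interchange holds in the extended reals ℝ ∪ {−∞}: sup_{w ∈ K} sup_{τ ∈ T} inf_{β ∈ ℝ^p} Σᵢ wᵢ·ℓᵢ(τ,β) = sup_{τ ∈ T} inf_{β ∈ ℝ^p} sup_{w ∈ K} Σᵢ wᵢ·ℓᵢ(τ,β). -/
open Finset

noncomputable section

lemma ereal_exists_coe_lt {x : EReal} (hx : ⊥ < x) : ∃ m : ℝ, (m : EReal) < x := by
  induction x using EReal.rec with
  | bot => exact absurd hx (lt_irrefl _)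
  | coe y => exact ⟨y - 1, by exact_mod_cast sub_one_lt y⟩
  | top => exact ⟨0, by simp⟩

lemma ereal_iInf_eq_bot' {ι : Sort*} (f : ι → EReal) (h : ∀ m : ℝ, ∃ i, f i ≤ (m : EReal)) :
    ⨅ i, f i = ⊥ := by
  rw [iInf_eq_bot]
  intro b hb
  obtain ⟨m, hm⟩ := ereal_exists_coe_lt hb
  obtain ⟨i, hi⟩ := h m
  exact ⟨i, lt_of_le_of_lt hi hm⟩

lemma ereal_le_coe_of_forall {x : EReal} {M : ℝ} (h : ∀ t : ℝ, M < t → x ≤ (t : EReal)) :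
    x ≤ (M : EReal) := by
  by_contra hx
  push_neg at hx
  induction x using EReal.rec with
  | bot => exact absurd hx (by simp)
  | coe y =>
    have hMy : M < y := by exact_mod_cast hx
    obtain ⟨t, ht1, ht2⟩ := exists_between hMy
    have := h t ht1
    have : y ≤ t := by exact_mod_cast this
    linarith
  | top =>
    have := h (M + 1) (by linarith)
    exact EReal.coe_ne_top _ (top_le_iff.mp this)

lemma clm_rep_pi {p : ℕ} (f : (Fin p → ℝ) →L[ℝ] ℝ) (y : Fin p → ℝ) :
    f y = ∑ j, y j * f (Pi.single j 1) := by
  have hy : y = ∑ j, y j • (Pi.single j 1 : Fin p → ℝ) := by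
    have : ∀ j, y j • (Pi.single j 1 : Fin p → ℝ) = Pi.single j (y j) := by
      intro j
      rw [← Pi.single_smul, smul_eq_mul, mul_one]
    simp_rw [this, Finset.univ_sum_single]
  conv_lhs => rw [hy]
  rw [map_sum]
  exact Finset.sum_congr rfl fun j _ => by rw [map_smul, smul_eq_mul]

lemma clm_rep_prod {p : ℕ} (f : (ℝ × (Fin p → ℝ)) →L[ℝ] ℝ) (x : ℝ × (Fin p → ℝ)) :
    f x = x.1 * f (1, 0) + ∑ j, x.2 j * f (0, Pi.single j 1) := by
  have hx : x = x.1 • ((1 : ℝ), (0 : Fin p → ℝ)) + ∑ j, x.2 j • ((0 : ℝ), (Pi.single j 1 : Fin p → ℝ)) := by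
    refine Prod.ext ?_ ?_
    · simp [Prod.fst_sum]
    · rw [Prod.snd_add, Prod.snd_sum]
      have : ∀ j, (x.2 j • ((0 : ℝ), (Pi.single j 1 : Fin p → ℝ))).2 = Pi.single j (x.2 j) := by
        intro j
        rw [Prod.smul_snd, ← Pi.single_smul, smul_eq_mul, mul_one]
      simp_rw [this, Finset.univ_sum_single]
      simp
  conv_lhs => rw [hx]
  rw [map_add, map_smul, map_sum, smul_eq_mul]
  congr 1
  exact Finset.sum_congr rfl fun j _ => by rw [map_smul, smul_eq_mul]

/-- Core minimax lemma. -/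
lemma core_minimax {n p : ℕ} (K : Set (Fin n → ℝ)) (hKne : K.Nonempty) (hKcpt : IsCompact K)
    (hKconv : Convex ℝ K) (a : Fin n → ℝ) (Δ : Fin n → Fin p → ℝ) :
    (⨆ w ∈ K, ⨅ β : Fin p → ℝ, ((∑ i, w i * (a i + ∑ j, β j * Δ i j) : ℝ) : EReal)) =
    ⨅ β : Fin p → ℝ, ⨆ w ∈ K, ((∑ i, w i * (a i + ∑ j, β j * Δ i j) : ℝ) : EReal) := by
  classical
  set A : (Fin n → ℝ) → ℝ := fun w => ∑ i, w i * a i with hA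
  set C : (Fin n → ℝ) → (Fin p → ℝ) := fun w j => ∑ i, w i * Δ i j with hC
  have key : ∀ (w : Fin n → ℝ) (β : Fin p → ℝ),
      (∑ i, w i * (a i + ∑ j, β j * Δ i j)) = A w + ∑ j, β j * C w j := by
    intro w β
    simp only [hA, hC, mul_add, Finset.sum_add_distrib, Finset.mul_sum]
    congr 1
    rw [Finset.sum_comm]
    exact Finset.sum_congr rfl fun j _ => Finset.sum_congr rfl fun i _ => by ring
  simp only [key]
  -- the linear map w ↦ (A w, C w)
  set L : (Fin n → ℝ) →ₗ[ℝ] ℝ × (Fin p → ℝ) :=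
    { toFun := fun w => (A w, C w)
      map_add' := by
        intro x y
        refine Prod.ext ?_ (funext fun j => ?_) <;>
          simp [hA, hC, add_mul, Finset.sum_add_distrib]
      map_smul' := by
        intro c x
        refine Prod.ext ?_ (funext fun j => ?_) <;>
          simp [hA, hC, Finset.mul_sum, mul_assoc] } with hL
  have hLcont : Continuous L := L.continuous_of_finiteDimensional
  have hAcont : Continuous A := (continuous_fst.comp hLcont)
  have hCcont : Continuous C := (continuous_snd.comp hLcont)
  -- value of the inner infimum
  have Fzero : ∀ w : Fin n → ℝ, C w = 0 →
      (⨅ β : Fin p → ℝ, ((A w + ∑ j, β j * C w j : ℝ) : EReal)) = (A w : EReal) := by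
    intro w hw
    have : ∀ β : Fin p → ℝ, ((A w + ∑ j, β j * C w j : ℝ) : EReal) = (A w : EReal) := by
      intro β; rw [hw]; simp
    simp_rw [this, iInf_const]
  have Fbot : ∀ w : Fin n → ℝ, C w ≠ 0 →
      (⨅ β : Fin p → ℝ, ((A w + ∑ j, β j * C w j : ℝ) : EReal)) = ⊥ := by
    intro w hw
    obtain ⟨j, hj⟩ : ∃ j, C w j ≠ 0 := by
      by_contra h
      push_neg at h
      exact hw (funext h)
    apply ereal_iInf_eq_bot'
    intro m
    refine ⟨Pi.single j ((m - A w) / C w j), ?_⟩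
    have hsum : ∑ j', (Pi.single j ((m - A w) / C w j) : Fin p → ℝ) j' * C w j'
        = (m - A w) / C w j * C w j := by
      rw [Finset.sum_eq_single j (fun b _ hb => by rw [Pi.single_eq_of_ne hb, zero_mul])
        (fun hb => absurd (Finset.mem_univ j) hb), Pi.single_eq_same]
    rw [hsum, div_mul_cancel₀ _ hj]
    norm_num
  refine le_antisymm ?_ ?_
  · exact iSup₂_le fun w hw => le_iInf fun β =>
      (iInf_le _ β).trans (le_iSup₂ (f := fun w (_ : w ∈ K) => ((A w + ∑ j, β j * C w j : ℝ) : EReal)) w hw)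
  · by_cases hzero : ∃ w₀ ∈ K, C w₀ = 0
    · -- Case A: some feasible w with C w = 0
      obtain ⟨w₀, hw₀K, hw₀⟩ := hzero
      set K0 : Set (Fin n → ℝ) := K ∩ C ⁻¹' {0} with hK0
      have hK0cpt : IsCompact K0 :=
        hKcpt.inter_right (isClosed_singleton.preimage hCcont)
      have hK0ne : K0.Nonempty := ⟨w₀, hw₀K, by simpa using hw₀⟩
      obtain ⟨ws, hwsK0, hws⟩ := hK0cpt.exists_isMaxOn hK0ne hAcont.continuousOn
      have step1 : (⨅ β : Fin p → ℝ, ⨆ w ∈ K, ((A w + ∑ j, β j * C w j : ℝ) : EReal))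
          ≤ (A ws : EReal) := by
        apply ereal_le_coe_of_forall
        intro t ht
        -- separate D = L '' K from the ray {(s,0) : s ≥ t}
        set D : Set (ℝ × (Fin p → ℝ)) := L '' K with hD
        have hDcpt : IsCompact D := hKcpt.image hLcont
        have hDconv : Convex ℝ D := hKconv.linear_image L
        set ray : Set (ℝ × (Fin p → ℝ)) := {x | t ≤ x.1 ∧ x.2 = 0} with hray
        have hrayclosed : IsClosed ray :=
          (isClosed_le continuous_const continuous_fst).inter
            (isClosed_eq continuous_snd continuous_const)
        have hrayconv : Convex ℝ ray := by
          rintro x ⟨hx1, hx2⟩ y ⟨hy1, hy2⟩ s1 s2 hs1 hs2 hsum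
        -- components
          constructor
          · have h1 : s1 * t ≤ s1 * x.1 := mul_le_mul_of_nonneg_left hx1 hs1
            have h2 : s2 * t ≤ s2 * y.1 := mul_le_mul_of_nonneg_left hy1 hs2
            have : (s1 + s2) * t = t := by rw [hsum, one_mul]
            simp only [Prod.fst_add, Prod.smul_fst, smul_eq_mul]
            nlinarith
          · simp only [Prod.snd_add, Prod.smul_snd, hx2, hy2, smul_zero, add_zero]
        have hdisj : Disjoint D ray := by
          rw [Set.disjoint_left]
          rintro x ⟨w, hwK, rfl⟩ ⟨hx1, hx2⟩
          have hCw : C w = 0 := hx2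
          have hwK0 : w ∈ K0 := ⟨hwK, by simpa using hCw⟩
          have : A w ≤ A ws := hws hwK0
          have : (L w).1 = A w := rfl
          simp only [this] at hx1
          linarith [hws hwK0]
        obtain ⟨f, uu, vv, hfD, huv, hfray⟩ :=
          geometric_hahn_banach_compact_closed hDconv hDcpt hrayconv hrayclosed hdisj
        set lam : ℝ := f (1, 0) with hlamdef
        set μ : Fin p → ℝ := fun j => f (0, Pi.single j 1) with hμdef
        have hrep : ∀ x : ℝ × (Fin p → ℝ), f x = x.1 * lam + ∑ j, x.2 j * μ j :=
          fun x => clm_rep_prod f x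
        have hlam_ray : ∀ s : ℝ, t ≤ s → vv < s * lam := by
          intro s hs
          have := hfray (s, 0) ⟨hs, rfl⟩
          rw [hrep] at this
          simpa using this
        have hlampos : 0 < lam := by
          rcases lt_trichotomy lam 0 with hneg | hz | hpos
          · exfalso
            have hs : t ≤ max t ((vv - 1) / lam) := le_max_left _ _
            have h1 := hlam_ray _ hs
            have h2 : max t ((vv - 1) / lam) * lam ≤ ((vv - 1) / lam) * lam :=
              mul_le_mul_of_nonpos_right (le_max_right _ _) hneg.le
            rw [div_mul_cancel₀ _ hneg.ne] at h2
            linarith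
          · exfalso
            have h1 := hfD (L ws) ⟨ws, hwsK0.1, rfl⟩
            have hCws : C ws = 0 := by
              have := hwsK0.2; simpa using this
            rw [hrep] at h1
            have : (L ws).2 = C ws := rfl
            rw [this, hCws] at h1
            simp [hz] at h1
            have h2 := hlam_ray t le_rfl
            rw [hz, mul_zero] at h2
            linarith
          · exact hpos
        set β : Fin p → ℝ := fun j => μ j / lam with hβdef
        have hmain : ∀ w ∈ K, A w + ∑ j, β j * C w j < t := by
          intro w hw
          have h1 := hfD (L w) ⟨w, hw, rfl⟩
          rw [hrep] at h1
          have hfst : (L w).1 = A w := rfl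
          have hsnd : (L w).2 = C w := rfl
          rw [hfst, hsnd] at h1
          have h2 := hlam_ray t le_rfl
          have hsum_eq : ∑ j, β j * C w j = (∑ j, C w j * μ j) / lam := by
            rw [Finset.sum_div]
            exact Finset.sum_congr rfl fun j _ => by rw [hβdef]; ring
          rw [hsum_eq]
          have heq : A w + (∑ j, C w j * μ j) / lam = (A w * lam + ∑ j, C w j * μ j) / lam := by
            field_simp
          rw [heq, div_lt_iff₀ hlampos]
          nlinarith
        refine iInf_le_of_le β (iSup₂_le fun w hw => ?_)
        exact_mod_cast (hmain w hw).le
      refine step1.trans ?_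
      have hCws : C ws = 0 := by have := hwsK0.2; simpa using this
      exact le_iSup₂_of_le ws hwsK0.1 (Fzero ws hCws).ge
    · -- Case B: C w ≠ 0 for all w ∈ K; both sides are ⊥
      push_neg at hzero
      have hbot : (⨅ β : Fin p → ℝ, ⨆ w ∈ K, ((A w + ∑ j, β j * C w j : ℝ) : EReal)) = ⊥ := by
        -- separate 0 from C '' K
        set L2 : (Fin n → ℝ) →ₗ[ℝ] (Fin p → ℝ) := (LinearMap.snd ℝ ℝ (Fin p → ℝ)).comp L with hL2
        have hL2app : ∀ w, L2 w = C w := fun w => rfl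
        set Cs : Set (Fin p → ℝ) := L2 '' K with hCs
        have hCscpt : IsCompact Cs := hKcpt.image L2.continuous_of_finiteDimensional
        have hCsconv : Convex ℝ Cs := hKconv.linear_image L2
        have h0notin : (0 : Fin p → ℝ) ∉ Cs := by
          rintro ⟨w, hwK, hw⟩
          exact hzero w hwK hw
        obtain ⟨f, uu, hfx, hfCs⟩ :=
          geometric_hahn_banach_point_closed hCsconv hCscpt.isClosed h0notin
        have huu : 0 < uu := by simpa using hfx
        set μ : Fin p → ℝ := fun j => f (Pi.single j 1) with hμdef
        have hrep : ∀ y : Fin p → ℝ, f y = ∑ j, y j * μ j := fun y => clm_rep_pi f y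
        have hsep : ∀ w ∈ K, uu < ∑ j, C w j * μ j := by
          intro w hw
          have := hfCs (L2 w) ⟨w, hw, rfl⟩
          rw [hrep] at this
          simpa [hL2app] using this
        obtain ⟨w₀, hw₀K, hmaxA⟩ := hKcpt.exists_isMaxOn hKne hAcont.continuousOn
        set B : ℝ := A w₀ with hBdef
        apply ereal_iInf_eq_bot'
        intro m
        set s : ℝ := max 0 ((B - m) / uu) with hsdef
        have hs0 : 0 ≤ s := le_max_left _ _
        refine ⟨fun j => -s * μ j, ?_⟩
        refine iSup₂_le fun w hw => ?_
        have hsum_eq : ∑ j, (-s * μ j) * C w j = -(s * ∑ j, C w j * μ j) := by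
          rw [Finset.mul_sum, ← Finset.sum_neg_distrib]
          exact Finset.sum_congr rfl fun j _ => by ring
        have h1 : s * uu ≤ s * ∑ j, C w j * μ j :=
          mul_le_mul_of_nonneg_left (hsep w hw).le hs0
        have h2 : B - m ≤ s * uu := by
          have : (B - m) / uu ≤ s := le_max_right _ _
          calc B - m = ((B - m) / uu) * uu := by field_simp
            _ ≤ s * uu := mul_le_mul_of_nonneg_right this huu.le
        have h3 : A w ≤ B := hmaxA hw
        have : A w + ∑ j, (-s * μ j) * C w j ≤ m := by
          rw [hsum_eq]; linarith
        exact_mod_cast this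
      rw [hbot]
      exact bot_le

/-- The CoinDICE Lagrangian integrand `ℓᵢ(τ,β) = τᵢ·rᵢ + βᵀΔᵢ(τ)` with
`Δᵢ(τ) = (1−γ)·uᵢ + τᵢ·vᵢ`. -/
def ell {n p : ℕ} (γ : ℝ) (r : Fin n → ℝ) (u v : Fin n → Fin p → ℝ)
    (τ : Fin n → ℝ) (β : Fin p → ℝ) (i : Fin n) : ℝ :=
  τ i * r i + ∑ j, β j * ((1 - γ) * u i j + τ i * v i j)

/-- minimax interchange (in the extended reals)
`sup_{w∈K} sup_{τ∈T} inf_β Σᵢ wᵢ ℓᵢ(τ,β) = sup_{τ∈T} inf_β sup_{w∈K} Σᵢ wᵢ ℓᵢ(τ,β)`. -/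
theorem stmt_7 (n p : ℕ) (hn : 1 ≤ n) (hp : 1 ≤ p)
    (γ : ℝ) (hγ0 : 0 < γ) (hγ1 : γ < 1)
    (r : Fin n → ℝ) (u v : Fin n → Fin p → ℝ)
    (K : Set (Fin n → ℝ)) (hKne : K.Nonempty) (hKcpt : IsCompact K) (hKconv : Convex ℝ K)
    (hKsub : ∀ w ∈ K, (∀ i, 0 ≤ w i) ∧ ∑ i, w i = 1)
    (Tset : Set (Fin n → ℝ)) (hTne : Tset.Nonempty) (hTcpt : IsCompact Tset)
    (hTconv : Convex ℝ Tset) (hTsub : ∀ τ ∈ Tset, ∀ i, 0 ≤ τ i) :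
    (⨆ w ∈ K, ⨆ τ ∈ Tset, ⨅ β : Fin p → ℝ,
        ((∑ i, w i * ell γ r u v τ β i : ℝ) : EReal)) =
    ⨆ τ ∈ Tset, ⨅ β : Fin p → ℝ, ⨆ w ∈ K,
        ((∑ i, w i * ell γ r u v τ β i : ℝ) : EReal) := by
  have hswap : (⨆ w ∈ K, ⨆ τ ∈ Tset, ⨅ β : Fin p → ℝ,
        ((∑ i, w i * ell γ r u v τ β i : ℝ) : EReal)) =
      ⨆ τ ∈ Tset, ⨆ w ∈ K, ⨅ β : Fin p → ℝ,
        ((∑ i, w i * ell γ r u v τ β i : ℝ) : EReal) := by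
    apply le_antisymm <;>
      exact iSup₂_le fun a ha => iSup₂_le fun b hb =>
        le_iSup₂_of_le b hb (le_iSup₂_of_le a ha le_rfl)
  rw [hswap]
  refine iSup_congr fun τ => iSup_congr fun hτ => ?_
  simp only [ell]
  exact core_minimax K hKne hKcpt hKconv (fun i => τ i * r i)
    (fun i j => (1 - γ) * u i j + τ i * v i j)
end
end

section
/- The following minimax interchange holds in the extended reals ℝ ∪ {−∞}: inf_{w ∈ K} sup_{τ ∈ T} inf_{β ∈ ℝ^p} Σᵢ wᵢ·ℓᵢ(τ,β) = inf_{w ∈ K} inf_{β ∈ ℝ^p} sup_{τ ∈ T} Σᵢ wᵢ·ℓᵢ(τ,β) = inf_{β ∈ ℝ^p} sup_{τ ∈ T} inf_{w ∈ K} Σᵢ wᵢ·ℓᵢ(τ,β). -/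
open Finset

noncomputable section

/-! The objective `∑ᵢ wᵢ ℓᵢ(τ,β) = w ⬝ᵥ ℓ(τ,β)` is continuous and affine in each of `w`, `τ`
and `β` separately, so Sion's minimax theorem applies to it with the compact convex set `T` on the
sup side: once with `β` ranging over `ℝ^p` (for each fixed `w`), and once with `w` ranging over
`K` (for each fixed `β`, after exchanging the two infima). -/

open Matrix

/-- Sion's theorem read in the order dual of `EReal`, so that the compact set carries the sup. -/
theorem biSup_biInf_coe_eq_biInf_biSup_coe {E F : Type*}
    [TopologicalSpace E] [AddCommGroup E] [Module ℝ E] [IsTopologicalAddGroup E]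
    [ContinuousSMul ℝ E]
    [TopologicalSpace F] [AddCommGroup F] [Module ℝ F] [IsTopologicalAddGroup F]
    [ContinuousSMul ℝ F]
    {X : Set E} {Y : Set F} {f : E → F → ℝ}
    (neX : X.Nonempty) (cX : Convex ℝ X) (kX : IsCompact X) (cY : Convex ℝ Y)
    (hfy : ∀ y ∈ Y, UpperSemicontinuousOn (f · y) X)
    (hfy' : ∀ y ∈ Y, QuasiconcaveOn ℝ X (f · y))
    (hfx : ∀ x ∈ X, LowerSemicontinuousOn (f x) Y)
    (hfx' : ∀ x ∈ X, QuasiconvexOn ℝ Y (f x)) :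
    ⨆ x ∈ X, ⨅ y ∈ Y, (f x y : EReal) = ⨅ y ∈ Y, ⨆ x ∈ X, (f x y : EReal) :=
  Sion.minimax' (β := ERealᵒᵈ) (f := fun x y => OrderDual.toDual (f x y : EReal)) neX cX kX
    (fun y hy => continuous_coe_real_ereal.comp_upperSemicontinuousOn (hfy y hy)
      EReal.coe_strictMono.monotone)
    (fun y hy => (hfy' y hy).monotone_comp EReal.coe_strictMono.monotone) cY
    (fun x hx => continuous_coe_real_ereal.comp_lowerSemicontinuousOn (hfx x hx)
      EReal.coe_strictMono.monotone)
    (fun x hx => (hfx' x hx).monotone_comp EReal.coe_strictMono.monotone)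

theorem quasilinearOn_of_map_combo_eq {E : Type*} [AddCommGroup E] [Module ℝ E]
    {s : Set E} {g : E → ℝ} (hs : Convex ℝ s)
    (hg : ∀ x y (a b : ℝ), a + b = 1 → g (a • x + b • y) = a * g x + b * g y) :
    QuasilinearOn ℝ s g :=
  ⟨ConvexOn.quasiconvexOn ⟨hs, fun x _ y _ a b _ _ hab => (hg x y a b hab).le⟩,
    ConcaveOn.quasiconcaveOn ⟨hs, fun x _ y _ a b _ _ hab => (hg x y a b hab).ge⟩⟩

section Lagrangian

variable {n p : ℕ} (γ : ℝ) (r : Fin n → ℝ) (u v : Fin n → Fin p → ℝ)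

theorem ell_eq_dotProduct (τ : Fin n → ℝ) (β : Fin p → ℝ) (i : Fin n) :
    ell γ r u v τ β i = τ i * r i + (1 - γ) * (β ⬝ᵥ u i) + τ i * (β ⬝ᵥ v i) := by
  rw [ell, add_assoc]
  congr 1
  simp only [dotProduct, Finset.mul_sum, ← Finset.sum_add_distrib]
  exact Finset.sum_congr rfl fun j _ => by ring

theorem ell_combo_tau (τ τ' : Fin n → ℝ) (β : Fin p → ℝ) {a b : ℝ} (hab : a + b = 1) :
    ell γ r u v (a • τ + b • τ') β = a • ell γ r u v τ β + b • ell γ r u v τ' β := by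
  funext i
  simp only [ell_eq_dotProduct, Pi.add_apply, Pi.smul_apply, smul_eq_mul]
  linear_combination (γ - 1) * (β ⬝ᵥ u i) * hab

theorem ell_combo_beta (τ : Fin n → ℝ) (β β' : Fin p → ℝ) {a b : ℝ} (hab : a + b = 1) :
    ell γ r u v τ (a • β + b • β') = a • ell γ r u v τ β + b • ell γ r u v τ β' := by
  funext i
  simp only [ell_eq_dotProduct, add_dotProduct, smul_dotProduct, Pi.add_apply, Pi.smul_apply,
    smul_eq_mul]
  linear_combination -(τ i * r i) * hab

theorem continuous_dotProduct_ell_tau (w : Fin n → ℝ) (β : Fin p → ℝ) :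
    Continuous fun τ => w ⬝ᵥ ell γ r u v τ β := by
  unfold dotProduct ell
  fun_prop

theorem continuous_dotProduct_ell_beta (w τ : Fin n → ℝ) :
    Continuous fun β => w ⬝ᵥ ell γ r u v τ β := by
  unfold dotProduct ell
  fun_prop

theorem continuous_dotProduct_ell_weights (τ : Fin n → ℝ) (β : Fin p → ℝ) :
    Continuous fun w => w ⬝ᵥ ell γ r u v τ β := by
  unfold dotProduct
  fun_prop

theorem quasilinearOn_dotProduct_ell_tau (w : Fin n → ℝ) (β : Fin p → ℝ)
    {T : Set (Fin n → ℝ)} (hT : Convex ℝ T) :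
    QuasilinearOn ℝ T fun τ => w ⬝ᵥ ell γ r u v τ β :=
  quasilinearOn_of_map_combo_eq hT fun τ τ' a b hab => by
    rw [ell_combo_tau γ r u v τ τ' β hab, dotProduct_add, dotProduct_smul, dotProduct_smul,
      smul_eq_mul, smul_eq_mul]

theorem quasilinearOn_dotProduct_ell_beta (w τ : Fin n → ℝ) {B : Set (Fin p → ℝ)}
    (hB : Convex ℝ B) :
    QuasilinearOn ℝ B fun β => w ⬝ᵥ ell γ r u v τ β :=
  quasilinearOn_of_map_combo_eq hB fun β β' a b hab => by
    rw [ell_combo_beta γ r u v τ β β' hab, dotProduct_add, dotProduct_smul, dotProduct_smul,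
      smul_eq_mul, smul_eq_mul]

theorem quasilinearOn_dotProduct_ell_weights (τ : Fin n → ℝ) (β : Fin p → ℝ)
    {K : Set (Fin n → ℝ)} (hK : Convex ℝ K) :
    QuasilinearOn ℝ K fun w => w ⬝ᵥ ell γ r u v τ β :=
  quasilinearOn_of_map_combo_eq hK fun w w' a b _ => by
    rw [add_dotProduct, smul_dotProduct, smul_dotProduct, smul_eq_mul, smul_eq_mul]

end Lagrangian

theorem stmt_8_general (n p : ℕ)
    (γ : ℝ)
    (r : Fin n → ℝ) (u v : Fin n → Fin p → ℝ)
    (K : Set (Fin n → ℝ)) (hKconv : Convex ℝ K)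
    (Tset : Set (Fin n → ℝ)) (hTne : Tset.Nonempty) (hTcpt : IsCompact Tset)
    (hTconv : Convex ℝ Tset) :
    (⨅ w ∈ K, ⨆ τ ∈ Tset, ⨅ β : Fin p → ℝ,
        ((∑ i, w i * ell γ r u v τ β i : ℝ) : EReal)) =
      (⨅ w ∈ K, ⨅ β : Fin p → ℝ, ⨆ τ ∈ Tset,
        ((∑ i, w i * ell γ r u v τ β i : ℝ) : EReal)) ∧
    (⨅ w ∈ K, ⨅ β : Fin p → ℝ, ⨆ τ ∈ Tset,
        ((∑ i, w i * ell γ r u v τ β i : ℝ) : EReal)) =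
      ⨅ β : Fin p → ℝ, ⨆ τ ∈ Tset, ⨅ w ∈ K,
        ((∑ i, w i * ell γ r u v τ β i : ℝ) : EReal) := by
  constructor
  · refine iInf_congr fun w => iInf_congr fun _ => ?_
    have h := biSup_biInf_coe_eq_biInf_biSup_coe (Y := Set.univ)
      (f := fun τ β => w ⬝ᵥ ell γ r u v τ β) hTne hTconv hTcpt convex_univ
      (fun β _ => (continuous_dotProduct_ell_tau γ r u v w β).continuousOn.upperSemicontinuousOn)
      (fun β _ => (quasilinearOn_dotProduct_ell_tau γ r u v w β hTconv).2)
      (fun τ _ => (continuous_dotProduct_ell_beta γ r u v w τ).continuousOn.lowerSemicontinuousOn)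
      (fun τ _ => (quasilinearOn_dotProduct_ell_beta γ r u v w τ convex_univ).1)
    simp only [Set.mem_univ, iInf_pos] at h
    exact h
  · simp only [@iInf_comm _ (_ ∈ K) (Fin p → ℝ)]
    rw [iInf_comm]
    refine iInf_congr fun β => (biSup_biInf_coe_eq_biInf_biSup_coe
      (f := fun τ w => w ⬝ᵥ ell γ r u v τ β) hTne hTconv hTcpt hKconv
      (fun w _ => (continuous_dotProduct_ell_tau γ r u v w β).continuousOn.upperSemicontinuousOn)
      (fun w _ => (quasilinearOn_dotProduct_ell_tau γ r u v w β hTconv).2)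
      (fun τ _ =>
        (continuous_dotProduct_ell_weights γ r u v τ β).continuousOn.lowerSemicontinuousOn)
      (fun τ _ => (quasilinearOn_dotProduct_ell_weights γ r u v τ β hKconv).1)).symm

/-- minimax interchange (in the extended reals)
`inf_{w∈K} sup_{τ∈T} inf_β Σᵢ wᵢ ℓᵢ = inf_{w∈K} inf_β sup_{τ∈T} Σᵢ wᵢ ℓᵢ
 = inf_β sup_{τ∈T} inf_{w∈K} Σᵢ wᵢ ℓᵢ`. -/
theorem stmt_8 (n p : ℕ) (hn : 1 ≤ n) (hp : 1 ≤ p)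
    (γ : ℝ) (hγ0 : 0 < γ) (hγ1 : γ < 1)
    (r : Fin n → ℝ) (u v : Fin n → Fin p → ℝ)
    (K : Set (Fin n → ℝ)) (hKne : K.Nonempty) (hKcpt : IsCompact K) (hKconv : Convex ℝ K)
    (hKsub : ∀ w ∈ K, (∀ i, 0 ≤ w i) ∧ ∑ i, w i = 1)
    (Tset : Set (Fin n → ℝ)) (hTne : Tset.Nonempty) (hTcpt : IsCompact Tset)
    (hTconv : Convex ℝ Tset) (hTsub : ∀ τ ∈ Tset, ∀ i, 0 ≤ τ i) :
    (⨅ w ∈ K, ⨆ τ ∈ Tset, ⨅ β : Fin p → ℝ,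
        ((∑ i, w i * ell γ r u v τ β i : ℝ) : EReal)) =
      (⨅ w ∈ K, ⨅ β : Fin p → ℝ, ⨆ τ ∈ Tset,
        ((∑ i, w i * ell γ r u v τ β i : ℝ) : EReal)) ∧
    (⨅ w ∈ K, ⨅ β : Fin p → ℝ, ⨆ τ ∈ Tset,
        ((∑ i, w i * ell γ r u v τ β i : ℝ) : EReal)) =
      ⨅ β : Fin p → ℝ, ⨆ τ ∈ Tset, ⨅ w ∈ K,
        ((∑ i, w i * ell γ r u v τ β i : ℝ) : EReal) :=
  stmt_8_general n p γ r u v K hKconv Tset hTne hTcpt hTconv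
end
end

section
/- The infimum of w ↦ Σᵢ wᵢ·ℓᵢ over K_f is attained, and min_{w ∈ K_f} Σᵢ wᵢ·ℓᵢ = sup_{λ > 0, η ∈ ℝ} [ −(1/n)·Σᵢ λ·f*((η − ℓᵢ)/λ) + η − λ·ξ/n ], where the supremand is −∞ whenever some f*((η − ℓᵢ)/λ) = +∞. -/
/-!
The primal problem is a convex program on the simplex with a single convex constraint, and the
uniform distribution is a strictly feasible (Slater) point, since `f 1 = 0 < ξ`. Separating the
origin from the convex set of attainable values of (normalisation defect, constraint, objective
gap) by Hahn–Banach produces Lagrange multipliers `η` and `λ ≥ 0`. Minimising the Lagrangian over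
`w ≥ 0` decouples into the `n` one-dimensional problems defining `f*`, which turns the Lagrangian
bound into the dual formula. The dual is concave in `(η, λ)` and finite at `λ = 1` for `η` small
(`f` lies above a supporting line), so the multiplier can be made strictly positive at an
arbitrarily small cost. Existence of the minimiser is compactness: `K_f` is a closed subset of the
simplex because `f` is lower semicontinuous.
-/

open Finset

noncomputable section

/-- The f-divergence ball of radius `ξ/n` around the uniform distribution on `n` points. -/
def Kf (f : ℝ → ℝ) (n : ℕ) (ξ : ℝ) : Set (Fin n → ℝ) :=
  {w : Fin n → ℝ | (∀ i, 0 ≤ w i) ∧ (∑ i, w i = 1) ∧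
    (1 / (n : ℝ)) * ∑ i, f ((n : ℝ) * w i) ≤ ξ / n}

/-- The convex conjugate of `f` restricted to the nonnegative half-line, with values
in the extended reals: `f*(y) = sup_{x ≥ 0} (x·y − f(x)) ∈ ℝ ∪ {+∞}`. -/
def fstar (f : ℝ → ℝ) (y : ℝ) : EReal :=
  ⨆ x : {x : ℝ // 0 ≤ x}, ((x.1 * y - f x.1 : ℝ) : EReal)

open Set Topology

lemma EReal.coe_finset_sum {ι : Type*} (s : Finset ι) (u : ι → ℝ) :
    ((∑ i ∈ s, u i : ℝ) : EReal) = ∑ i ∈ s, (u i : EReal) :=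
  map_sum (⟨⟨Real.toEReal, EReal.coe_zero⟩, EReal.coe_add⟩ : ℝ →+ EReal) u s

lemma EReal.coe_mul_iSup_le {ι : Sort*} {c : ℝ} (hc : 0 < c) (u : ι → EReal) :
    (c : EReal) * ⨆ i, u i ≤ ⨆ i, (c : EReal) * u i := by
  have hc' : (0 : EReal) < c := EReal.coe_pos.2 hc
  rw [mul_comm, ← EReal.le_div_iff_mul_le hc' (EReal.coe_ne_top c)]
  refine iSup_le fun i => (EReal.le_div_iff_mul_le hc' (EReal.coe_ne_top c)).2 ?_
  rw [mul_comm]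
  exact le_iSup (fun i => (c : EReal) * u i) i

lemma Finset.sum_iSup_coe_le {ι X : Type*} [Nonempty X] (s : Finset ι) (u : ι → X → ℝ) {K : ℝ}
    (h : ∀ x : ι → X, ∑ i ∈ s, u i (x i) ≤ K) : ∑ i ∈ s, ⨆ j, (u i j : EReal) ≤ K := by
  classical
  induction s using Finset.induction_on generalizing K with
  | empty => simpa using h fun _ => Classical.arbitrary X
  | insert a s ha ih =>
    rw [Finset.sum_insert ha]
    refine EReal.add_le_of_forall_lt fun p hp q hq => ?_
    obtain ⟨j, hj⟩ := lt_iSup_iff.1 hp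
    have hs : ∑ i ∈ s, ⨆ j, (u i j : EReal) ≤ ((K - u a j : ℝ) : EReal) := ih fun x => by
      have := h (Function.update x a j)
      rw [Finset.sum_insert ha, Function.update_self, Finset.sum_congr rfl fun i hi => by
        rw [Function.update_of_ne (ne_of_mem_of_not_mem hi ha)]] at this
      linarith
    calc p + q ≤ (u a j : EReal) + ((K - u a j : ℝ) : EReal) := add_le_add hj.le (hq.le.trans hs)
      _ = K := by rw [← EReal.coe_add, add_sub_cancel]

lemma nonpos_of_forall_add_mul_nonpos {a b : ℝ} (h : ∀ s : ℝ, 0 ≤ s → a + s * b ≤ 0) : b ≤ 0 := by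
  by_contra! hb
  have := h ((|a| + 1) / b) (by positivity)
  rw [div_mul_cancel₀ _ hb.ne'] at this
  linarith [neg_abs_le a]

lemma StrongDual.apply_prod_prod (φ : StrongDual ℝ (ℝ × ℝ × ℝ)) (p : ℝ × ℝ × ℝ) :
    φ p = p.1 * φ (1, 0, 0) + p.2.1 * φ (0, 1, 0) + p.2.2 * φ (0, 0, 1) := by
  conv_lhs => rw [show p = p.1 • ((1 : ℝ), (0 : ℝ), (0 : ℝ)) + p.2.1 • ((0 : ℝ), (1 : ℝ), (0 : ℝ))
    + p.2.2 • ((0 : ℝ), (0 : ℝ), (1 : ℝ)) by ext <;> simp]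
  simp only [map_add, map_smul, smul_eq_mul]

lemma ConvexOn.add_rightDeriv_mul_sub_le {S : Set ℝ} {f : ℝ → ℝ} (hf : ConvexOn ℝ S f) {x y : ℝ}
    (hx : x ∈ interior S) (hy : y ∈ S) : f x + derivWithin f (Ioi x) x * (y - x) ≤ f y := by
  rcases lt_trichotomy x y with hxy | rfl | hyx
  · have := hf.rightDeriv_le_slope_of_mem_interior hx hy hxy
    rw [slope_def_field, le_div_iff₀ (sub_pos.2 hxy)] at this
    linarith
  · simp
  · have h₁ := hf.slope_le_leftDeriv_of_mem_interior hy hx hyx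
    have h₂ := hf.leftDeriv_le_rightDeriv_of_mem_interior hx
    rw [slope_def_field, div_le_iff₀ (sub_pos.2 hyx)] at h₁
    nlinarith

section LagrangeMultipliers

variable {E : Type*} [AddCommGroup E] [Module ℝ E] {D : Set E} {F g : E → ℝ} {h : E →ₗ[ℝ] ℝ}
  {c m : ℝ}

def valueSet (D : Set E) (F g : E → ℝ) (h : E →ₗ[ℝ] ℝ) (c m : ℝ) : Set (ℝ × ℝ × ℝ) :=
  {p | ∃ x ∈ D, h x - c = p.1 ∧ g x ≤ p.2.1 ∧ F x - m ≤ p.2.2}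

lemma convex_valueSet (hF : ConvexOn ℝ D F) (hg : ConvexOn ℝ D g) :
    Convex ℝ (valueSet D F g h c m) := by
  rintro p ⟨x, hx, hx₁, hx₂, hx₃⟩ q ⟨y, hy, hy₁, hy₂, hy₃⟩ a b ha hb hab
  refine ⟨a • x + b • y, hF.1 hx hy ha hb hab, ?_, ?_, ?_⟩
  · simp only [map_add, map_smul, smul_eq_mul, Prod.fst_add, Prod.smul_fst, ← hx₁, ← hy₁]
    linear_combination c * hab
  · calc g (a • x + b • y) ≤ a * g x + b * g y := hg.2 hx hy ha hb hab
      _ ≤ (a • p + b • q).2.1 := by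
        simp only [Prod.snd_add, Prod.smul_snd, Prod.fst_add, Prod.smul_fst, smul_eq_mul]
        gcongr
  · calc F (a • x + b • y) - m ≤ a * (F x - m) + b * (F y - m) := by
          linear_combination hF.2 hx hy ha hb hab + m * hab
      _ ≤ (a • p + b • q).2.2 := by
        simp only [Prod.snd_add, Prod.smul_snd, smul_eq_mul]
        gcongr

lemma zero_notMem_interior_valueSet (hm : ∀ x ∈ D, h x = c → g x ≤ 0 → m ≤ F x) :
    (0 : ℝ × ℝ × ℝ) ∉ interior (valueSet D F g h c m) := by
  intro h0
  have hev : ∀ᶠ t in 𝓝 (0 : ℝ), ((0 : ℝ), (0 : ℝ), t) ∈ valueSet D F g h c m :=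
    (continuous_const.prodMk (continuous_const.prodMk continuous_id)).continuousAt.preimage_mem_nhds
      (mem_interior_iff_mem_nhds.1 h0)
  obtain ⟨t, ht, x, hx, hx₁, hx₂, hx₃⟩ := hev.exists_lt
  linarith [hm x hx (by linarith) hx₂]

lemma nonempty_interior_valueSet (hF : ConvexOn ℝ D F) (hg : ConvexOn ℝ D g) {x₁ x₂ : E}
    (hx₁ : x₁ ∈ D) (hx₂ : x₂ ∈ D) (h₁ : h x₁ < c) (h₂ : c < h x₂) :
    (interior (valueSet D F g h c m)).Nonempty := by
  set B := Ioo (h x₁ - c) (h x₂ - c) ×ˢ Ioi (max (g x₁) (g x₂)) ×ˢ Ioi (max (F x₁) (F x₂) - m)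
  have hB : IsOpen B := isOpen_Ioo.prod (isOpen_Ioi.prod isOpen_Ioi)
  have hBA : B ⊆ valueSet D F g h c m := by
    rintro ⟨u, v, t⟩ ⟨⟨hu₁, hu₂⟩, hv, ht⟩
    have hd : 0 < h x₂ - h x₁ := by linarith
    -- the point of the segment `[x₁, x₂]` at which `h = u + c`
    set a := (h x₂ - c - u) / (h x₂ - h x₁)
    set b := (u + c - h x₁) / (h x₂ - h x₁)
    have ha : 0 ≤ a := div_nonneg (by linarith) hd.le
    have hb : 0 ≤ b := div_nonneg (by linarith) hd.le
    have hab : a + b = 1 := by simp only [a, b]; field_simp; ring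
    refine ⟨a • x₁ + b • x₂, hF.1 hx₁ hx₂ ha hb hab, ?_, ?_, ?_⟩
    · simp only [map_add, map_smul, smul_eq_mul, a, b]
      field_simp
      ring
    · exact (hg.le_on_segment' hx₁ hx₂ ha hb hab).trans (le_of_lt hv)
    · have : max (F x₁) (F x₂) - m < t := ht
      linarith [hF.le_on_segment' hx₁ hx₂ ha hb hab]
  refine ⟨(0, max (g x₁) (g x₂) + 1, max (F x₁) (F x₂) - m + 1), interior_maximal hBA hB ?_⟩
  exact ⟨⟨by simpa using h₁, by simpa using h₂⟩, by simp, by simp⟩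

theorem exists_lagrange_multipliers (hF : ConvexOn ℝ D F) (hg : ConvexOn ℝ D g)
    (hm : ∀ x ∈ D, h x = c → g x ≤ 0 → m ≤ F x) {x₀ x₁ x₂ : E} (hx₀ : x₀ ∈ D) (hx₁ : x₁ ∈ D)
    (hx₂ : x₂ ∈ D) (h₀ : h x₀ = c) (hg₀ : g x₀ < 0) (h₁ : h x₁ < c) (h₂ : c < h x₂) :
    ∃ η lam : ℝ, 0 ≤ lam ∧ ∀ x ∈ D, m ≤ F x + η * (c - h x) + lam * g x := by
  obtain ⟨φ, hφ0, hφ⟩ := geometric_hahn_banach_of_nonempty_interior_point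
    (convex_valueSet hF hg) (zero_notMem_interior_valueSet hm)
    (nonempty_interior_valueSet (m := m) hF hg hx₁ hx₂ h₁ h₂)
  obtain ⟨α, β, γ, hφ_eq⟩ : ∃ α β γ : ℝ, ∀ p, φ p = p.1 * α + p.2.1 * β + p.2.2 * γ :=
    ⟨_, _, _, φ.apply_prod_prod⟩
  have key : ∀ x ∈ D, ∀ v t, g x ≤ v → F x - m ≤ t → (h x - c) * α + v * β + t * γ ≤ 0 :=
    fun x hx v t hv ht => by
      simpa [hφ_eq] using hφ (h x - c, v, t) ⟨x, hx, rfl, hv, ht⟩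
  have hβ : β ≤ 0 := nonpos_of_forall_add_mul_nonpos
      (a := (h x₀ - c) * α + g x₀ * β + (F x₀ - m) * γ) fun s hs => by
    linarith [key x₀ hx₀ (g x₀ + s) (F x₀ - m) (by linarith) le_rfl]
  have hγ : γ ≤ 0 := nonpos_of_forall_add_mul_nonpos
      (a := (h x₀ - c) * α + g x₀ * β + (F x₀ - m) * γ) fun s hs => by
    linarith [key x₀ hx₀ (g x₀) (F x₀ - m + s) le_rfl (by linarith)]
  -- `γ = 0` would force `β = 0` at the Slater point `x₀`, and then `α = 0` at `x₁` and `x₂`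
  have hγ' : γ < 0 := by
    refine hγ.lt_of_ne fun hγ0 => hφ0 ?_
    have hβ0 : β = 0 := le_antisymm hβ <| by
      have := key x₀ hx₀ (g x₀) (F x₀ - m) le_rfl le_rfl
      rw [h₀, hγ0] at this
      nlinarith
    have hα0 : α = 0 := by
      have := key x₁ hx₁ (g x₁) (F x₁ - m) le_rfl le_rfl
      have := key x₂ hx₂ (g x₂) (F x₂ - m) le_rfl le_rfl
      rw [hβ0, hγ0] at *
      nlinarith
    refine ContinuousLinearMap.ext fun p => ?_
    simp [hφ_eq, hα0, hβ0, hγ0]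
  refine ⟨-α / γ, β / γ, div_nonneg_of_nonpos hβ hγ'.le, fun x hx => ?_⟩
  have hx_eq : F x + -α / γ * (c - h x) + β / γ * g x - m
      = ((h x - c) * α + g x * β + (F x - m) * γ) / γ := by
    field_simp [hγ'.ne]
    ring
  rw [← sub_nonneg, hx_eq]
  exact div_nonneg_of_nonpos (key x hx (g x) (F x - m) le_rfl le_rfl) hγ'.le

end LagrangeMultipliers

lemma le_fstar (f : ℝ → ℝ) (y : ℝ) {x : ℝ} (hx : 0 ≤ x) :
    ((x * y - f x : ℝ) : EReal) ≤ fstar f y :=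
  le_iSup (fun z : {x : ℝ // 0 ≤ x} => ((z.1 * y - f z.1 : ℝ) : EReal)) ⟨x, hx⟩

def fDiv (f : ℝ → ℝ) (n : ℕ) (w : Fin n → ℝ) : ℝ :=
  1 / (n : ℝ) * ∑ i, f ((n : ℝ) * w i)

def lagrangian (f : ℝ → ℝ) (n : ℕ) (ξ : ℝ) (ℓ : Fin n → ℝ) (lam η : ℝ) (w : Fin n → ℝ) : ℝ :=
  ∑ i, w i * ℓ i + η * (1 - ∑ i, w i) + lam * (fDiv f n w - ξ / n)

def dualFun (f : ℝ → ℝ) (n : ℕ) (ξ : ℝ) (ℓ : Fin n → ℝ) (lam η : ℝ) : EReal :=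
  ((η - lam * ξ / n : ℝ) : EReal) -
    ((1 / (n : ℝ) : ℝ) : EReal) * (∑ i, (lam : EReal) * fstar f ((η - ℓ i) / lam))

section Primal

variable {f : ℝ → ℝ} {n : ℕ} {ξ : ℝ}

lemma fDiv_const (hn : n ≠ 0) (t : ℝ) : fDiv f n (fun _ => t / n) = f t := by
  have hn' : (n : ℝ) ≠ 0 := Nat.cast_ne_zero.2 hn
  simp [fDiv, mul_div_cancel₀ _ hn', hn']

lemma convexOn_fDiv (hconv : ConvexOn ℝ (Ici 0) f) : ConvexOn ℝ (Ici 0) (fDiv f n) := by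
  refine ⟨convex_Ici 0, fun v hv w hw a b ha hb hab => ?_⟩
  have hterm : ∀ i, f (n * (a • v + b • w) i) ≤ a * f (n * v i) + b * f (n * w i) := fun i => by
    have := hconv.2 (mul_nonneg n.cast_nonneg (hv i)) (mul_nonneg n.cast_nonneg (hw i)) ha hb hab
    simp only [smul_eq_mul, Pi.add_apply, Pi.smul_apply] at this ⊢
    rwa [show (n : ℝ) * (a * v i + b * w i) = a * (n * v i) + b * (n * w i) by ring]
  simp only [fDiv, smul_eq_mul, mul_left_comm a, mul_left_comm b, ← mul_add, Finset.mul_sum,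
    ← Finset.sum_add_distrib]
  gcongr with i
  exact hterm i

lemma lowerSemicontinuousOn_fDiv (hlsc : LowerSemicontinuousOn f (Ici 0)) :
    LowerSemicontinuousOn (fDiv f n) (Ici 0) := by
  refine (continuous_const_mul (1 / (n : ℝ))).comp_lowerSemicontinuousOn
    (lowerSemicontinuousOn_sum fun i _ => hlsc.comp (by fun_prop) fun w hw => ?_)
    (monotone_mul_left_of_nonneg (by positivity))
  exact mul_nonneg n.cast_nonneg (hw i)

lemma isCompact_Kf (hlsc : LowerSemicontinuousOn f (Ici 0)) : IsCompact (Kf f n ξ) := by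
  obtain ⟨v, hv, hKv⟩ := lowerSemicontinuousOn_iff_preimage_Iic.1
    ((lowerSemicontinuousOn_fDiv hlsc).mono fun w (hw : w ∈ stdSimplex ℝ (Fin n)) => hw.1) (ξ / n)
  have hK : Kf f n ξ = stdSimplex ℝ (Fin n) ∩ fDiv f n ⁻¹' Iic (ξ / n) :=
    Set.ext fun w => and_assoc.symm
  rw [hK, hKv]
  exact (isCompact_stdSimplex ℝ (Fin n)).inter_right hv

lemma const_mem_Kf (hf1 : f 1 = 0) (hn : n ≠ 0) (hξ : 0 < ξ) :
    (fun _ : Fin n => (1 : ℝ) / n) ∈ Kf f n ξ := by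
  refine ⟨fun _ => by positivity, by simp [Nat.cast_ne_zero.2 hn], ?_⟩
  rw [← fDiv, fDiv_const hn, hf1]
  positivity

lemma exists_forall_le_Kf (hlsc : LowerSemicontinuousOn f (Ici 0)) (hf1 : f 1 = 0) (hn : n ≠ 0)
    (hξ : 0 < ξ) (ℓ : Fin n → ℝ) :
    ∃ w ∈ Kf f n ξ, ∀ v ∈ Kf f n ξ, ∑ i, w i * ℓ i ≤ ∑ i, v i * ℓ i := by
  obtain ⟨w, hw, hmin⟩ := (isCompact_Kf hlsc).exists_isMinOn ⟨_, const_mem_Kf hf1 hn hξ⟩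
    (f := fun w : Fin n → ℝ => ∑ i, w i * ℓ i) (by fun_prop)
  exact ⟨w, hw, fun v hv => hmin hv⟩

end Primal

section Duality

variable {f : ℝ → ℝ} {n : ℕ} {ξ : ℝ} {ℓ : Fin n → ℝ} {lam η : ℝ}

lemma lagrangian_eq (hn : n ≠ 0) (hlam : lam ≠ 0) (w : Fin n → ℝ) :
    lagrangian f n ξ ℓ lam η w = η - lam * ξ / n -
      1 / (n : ℝ) * ∑ i, lam * ((n : ℝ) * w i * ((η - ℓ i) / lam) - f ((n : ℝ) * w i)) := by
  have hn' : (n : ℝ) ≠ 0 := Nat.cast_ne_zero.2 hn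
  have hterm : ∀ i, lam * ((n : ℝ) * w i * ((η - ℓ i) / lam) - f ((n : ℝ) * w i))
      = n * (η * w i) - n * (w i * ℓ i) - lam * f ((n : ℝ) * w i) := fun i => by
    field_simp
  simp only [lagrangian, fDiv, hterm, Finset.sum_sub_distrib, ← Finset.mul_sum]
  field_simp
  ring

lemma dualFun_le_lagrangian (hn : n ≠ 0) (hlam : 0 < lam) {w : Fin n → ℝ} (hw : ∀ i, 0 ≤ w i) :
    dualFun f n ξ ℓ lam η ≤ lagrangian f n ξ ℓ lam η w := by
  have hterm : ∀ i, ((lam * ((n : ℝ) * w i * ((η - ℓ i) / lam) - f ((n : ℝ) * w i)) : ℝ) : EReal)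
      ≤ (lam : EReal) * fstar f ((η - ℓ i) / lam) := fun i => by
    rw [EReal.coe_mul]
    exact mul_le_mul_of_nonneg_left (le_fstar f _ (mul_nonneg n.cast_nonneg (hw i)))
      (EReal.coe_nonneg.2 hlam.le)
  rw [lagrangian_eq hn hlam.ne', EReal.coe_sub, EReal.coe_mul, EReal.coe_finset_sum]
  exact EReal.sub_le_sub le_rfl <| mul_le_mul_of_nonneg_left
    (Finset.sum_le_sum fun i _ => hterm i) (EReal.coe_nonneg.2 (by positivity))

lemma le_dualFun (hn : n ≠ 0) (hlam : 0 < lam) {m : ℝ}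
    (hL : ∀ w : Fin n → ℝ, (∀ i, 0 ≤ w i) → m ≤ lagrangian f n ξ ℓ lam η w) :
    (m : EReal) ≤ dualFun f n ξ ℓ lam η := by
  have hn' : (0 : ℝ) < n := Nat.cast_pos.2 (Nat.pos_of_ne_zero hn)
  set K := η - lam * ξ / n - m
  have hsum : ∑ i, (lam : EReal) * fstar f ((η - ℓ i) / lam) ≤ ((n * K : ℝ) : EReal) :=
    calc ∑ i, (lam : EReal) * fstar f ((η - ℓ i) / lam)
        ≤ ∑ i, ⨆ x : {x : ℝ // 0 ≤ x}, ((lam * (x.1 * ((η - ℓ i) / lam) - f x.1) : ℝ) : EReal) :=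
          Finset.sum_le_sum fun i _ => by
            simpa only [fstar, EReal.coe_mul] using EReal.coe_mul_iSup_le hlam _
      _ ≤ _ := Finset.sum_iSup_coe_le _ _ fun x => by
          have := hL (fun i => (x i).1 / n) fun i => div_nonneg (x i).2 hn'.le
          simp only [lagrangian_eq hn hlam.ne', mul_div_cancel₀ _ hn'.ne'] at this
          calc ∑ i, lam * ((x i).1 * ((η - ℓ i) / lam) - f (x i).1)
              = n * (1 / n * ∑ i, lam * ((x i).1 * ((η - ℓ i) / lam) - f (x i).1)) := by
                field_simp
            _ ≤ n * K := by gcongr; linarith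
  calc (m : EReal)
      = ((η - lam * ξ / n : ℝ) : EReal) - ((1 / (n : ℝ) : ℝ) : EReal) * ((n * K : ℝ) : EReal) := by
        rw [← EReal.coe_mul, ← EReal.coe_sub, ← mul_assoc, one_div_mul_cancel hn'.ne', one_mul]
        simp only [K, sub_sub_cancel]
    _ ≤ dualFun f n ξ ℓ lam η :=
        EReal.sub_le_sub le_rfl <|
          mul_le_mul_of_nonneg_left hsum (EReal.coe_nonneg.2 (by positivity))

lemma lagrangian_le_of_mem_Kf (hlam : 0 ≤ lam) {w : Fin n → ℝ} (hw : w ∈ Kf f n ξ) :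
    lagrangian f n ξ ℓ lam η w ≤ ∑ i, w i * ℓ i := by
  have hdiv : fDiv f n w - ξ / n ≤ 0 := sub_nonpos.2 hw.2.2
  simp only [lagrangian, hw.2.1, sub_self, mul_zero, add_zero]
  nlinarith

lemma lagrangian_convex_combination (t lam₀ lam₁ η₀ η₁ : ℝ) (w : Fin n → ℝ) :
    lagrangian f n ξ ℓ ((1 - t) * lam₀ + t * lam₁) ((1 - t) * η₀ + t * η₁) w =
      (1 - t) * lagrangian f n ξ ℓ lam₀ η₀ w + t * lagrangian f n ξ ℓ lam₁ η₁ w := by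
  simp only [lagrangian]
  ring

lemma exists_forall_le_lagrangian_one (hconv : ConvexOn ℝ (Ici 0) f) (hn : n ≠ 0) :
    ∃ η M : ℝ, ∀ w : Fin n → ℝ, (∀ i, 0 ≤ w i) → M ≤ lagrangian f n ξ ℓ 1 η w := by
  -- `f` lies above its supporting line of slope `a` at `1`; with `η = a - ∑ |ℓ i|` this leaves
  -- only nonnegative coefficients of the `w i` in the Lagrangian
  set a := derivWithin f (Ioi 1) 1
  set S := ∑ i, |ℓ i|
  refine ⟨a - S, a - S + f 1 - a - ξ / n, fun w hw => ?_⟩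
  have hn' : (n : ℝ) ≠ 0 := Nat.cast_ne_zero.2 hn
  have hdiv : f 1 + a * (∑ i, w i - 1) ≤ fDiv f n w :=
    calc f 1 + a * (∑ i, w i - 1) = 1 / (n : ℝ) * ∑ i, (f 1 + a * (n * w i - 1)) := by
          simp only [Finset.sum_add_distrib, Finset.sum_const, Finset.card_univ, Fintype.card_fin,
            nsmul_eq_mul, ← Finset.mul_sum, Finset.sum_sub_distrib]
          field_simp
      _ ≤ fDiv f n w := by
          unfold fDiv
          gcongr with i
          exact hconv.add_rightDeriv_mul_sub_le (by simp) (mul_nonneg n.cast_nonneg (hw i))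
  have hℓ : 0 ≤ ∑ i, w i * (ℓ i + S) := Finset.sum_nonneg fun i _ => mul_nonneg (hw i) <| by
    linarith [neg_abs_le (ℓ i), Finset.single_le_sum (fun j _ => abs_nonneg (ℓ j)) (mem_univ i)]
  simp only [mul_add, Finset.sum_add_distrib, ← Finset.sum_mul] at hℓ
  simp only [lagrangian]
  nlinarith

lemma exists_lagrangian_lower_bound (hconv : ConvexOn ℝ (Ici 0) f) (hf1 : f 1 = 0) (hn : n ≠ 0)
    (hξ : 0 < ξ) {m : ℝ} (hm : ∀ v ∈ Kf f n ξ, m ≤ ∑ i, v i * ℓ i) :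
    ∃ η lam : ℝ, 0 ≤ lam ∧ ∀ w : Fin n → ℝ, (∀ i, 0 ≤ w i) → m ≤ lagrangian f n ξ ℓ lam η w := by
  have hn' : (1 : ℝ) ≤ n := Nat.one_le_cast.2 (Nat.one_le_iff_ne_zero.2 hn)
  have hF : ConvexOn ℝ (Ici 0) fun w : Fin n → ℝ => ∑ i, w i * ℓ i :=
    ⟨convex_Ici 0, fun v _ w _ a b _ _ _ => le_of_eq <| by
      simp only [Pi.add_apply, Pi.smul_apply, smul_eq_mul, Finset.mul_sum, ← Finset.sum_add_distrib]
      exact Finset.sum_congr rfl fun i _ => by ring⟩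
  have hg : ConvexOn ℝ (Ici 0) fun w => fDiv f n w - ξ / n :=
    (convexOn_fDiv hconv).sub (concaveOn_const _ (convex_Ici 0))
  obtain ⟨η, lam, hlam, h⟩ := exists_lagrange_multipliers hF hg
    (h := ∑ i, LinearMap.proj i) (c := 1) (m := m)
    (fun w hw h1 hg => hm w ⟨hw, by simpa using h1, sub_nonpos.1 hg⟩)
    (x₀ := fun _ => 1 / n) (x₁ := 0) (x₂ := fun _ => 2)
    (fun _ => by positivity) Set.self_mem_Ici (fun _ => by positivity)
    (by simp [Nat.cast_ne_zero.2 hn]) (by rw [fDiv_const hn, hf1]; simp [hξ, Nat.pos_of_ne_zero hn])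
    (by simp) (by simp; linarith)
  exact ⟨η, lam, hlam, fun w hw => by simpa [lagrangian] using h w hw⟩

lemma exists_pos_lagrangian_lower_bound (hconv : ConvexOn ℝ (Ici 0) f) (hf1 : f 1 = 0)
    (hn : n ≠ 0) (hξ : 0 < ξ) {m : ℝ} (hm : ∀ v ∈ Kf f n ξ, m ≤ ∑ i, v i * ℓ i) {ε : ℝ}
    (hε : 0 < ε) : ∃ lam η : ℝ, 0 < lam ∧
      ∀ w : Fin n → ℝ, (∀ i, 0 ≤ w i) → m - ε ≤ lagrangian f n ξ ℓ lam η w := by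
  obtain ⟨η₀, lam₀, hlam₀, h₀⟩ := exists_lagrangian_lower_bound hconv hf1 hn hξ hm
  obtain ⟨η₁, M, h₁⟩ := exists_forall_le_lagrangian_one (ξ := ξ) (ℓ := ℓ) hconv hn
  -- the Lagrangian is affine in the multipliers: move from `(η₀, lam₀)` slightly towards `(η₁, 1)`
  set t := min 1 (ε / (|m - M| + 1))
  have ht₀ : 0 < t := lt_min one_pos (by positivity)
  have ht₁ : t ≤ 1 := min_le_left _ _
  have htε : t * |m - M| ≤ ε := by
    have := (le_div_iff₀ (by positivity)).1 (min_le_right 1 (ε / (|m - M| + 1)))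
    nlinarith
  refine ⟨(1 - t) * lam₀ + t * 1, (1 - t) * η₀ + t * η₁, by nlinarith, fun w hw => ?_⟩
  rw [lagrangian_convex_combination]
  have := mul_le_mul_of_nonneg_left (h₀ w hw) (sub_nonneg.2 ht₁)
  have := mul_le_mul_of_nonneg_left (h₁ w hw) ht₀.le
  nlinarith [le_abs_self (m - M)]

lemma le_iSup_dualFun (hconv : ConvexOn ℝ (Ici 0) f) (hf1 : f 1 = 0) (hn : n ≠ 0) (hξ : 0 < ξ)
    {m : ℝ} (hm : ∀ v ∈ Kf f n ξ, m ≤ ∑ i, v i * ℓ i) :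
    (m : EReal) ≤ ⨆ (lam : ℝ) (_ : 0 < lam) (η : ℝ), dualFun f n ξ ℓ lam η := by
  refine le_of_forall_lt fun c hc => ?_
  obtain ⟨x, hcx, hxm⟩ := EReal.exists_between_coe_real hc
  obtain ⟨lam, η, hlam, hL⟩ :=
    exists_pos_lagrangian_lower_bound hconv hf1 hn hξ hm (sub_pos.2 (EReal.coe_lt_coe_iff.1 hxm))
  refine hcx.trans_le (le_iSup₂_of_le lam hlam (le_iSup_of_le η (le_dualFun hn hlam ?_)))
  simpa using hL

lemma iSup_dualFun_le (hn : n ≠ 0) {w : Fin n → ℝ} (hw : w ∈ Kf f n ξ) :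
    ⨆ (lam : ℝ) (_ : 0 < lam) (η : ℝ), dualFun f n ξ ℓ lam η ≤ ((∑ i, w i * ℓ i : ℝ) : EReal) :=
  iSup₂_le fun _ hlam => iSup_le fun _ => (dualFun_le_lagrangian hn hlam hw.1).trans
    (EReal.coe_le_coe_iff.2 (lagrangian_le_of_mem_Kf hlam.le hw))

end Duality

/-- the infimum of `w ↦ Σᵢ wᵢ ℓᵢ` over `K_f` is attained, and the dual
formula `min_{w ∈ K_f} Σᵢ wᵢ ℓᵢ = sup_{λ>0, η} [−(1/n)·Σᵢ λ·f*((η−ℓᵢ)/λ) + η − λ·ξ/n]`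
holds in the extended reals. -/
theorem stmt_10 (f : ℝ → ℝ) (hconv : ConvexOn ℝ (Set.Ici 0) f)
    (hlsc : LowerSemicontinuousOn f (Set.Ici 0)) (hf1 : f 1 = 0)
    (n : ℕ) (hn : 1 ≤ n) (ξ : ℝ) (hξ : 0 < ξ) (ℓ : Fin n → ℝ) :
    ∃ w ∈ Kf f n ξ, (∀ v ∈ Kf f n ξ, ∑ i, w i * ℓ i ≤ ∑ i, v i * ℓ i) ∧
      ((∑ i, w i * ℓ i : ℝ) : EReal) =
        ⨆ (lam : ℝ) (_ : 0 < lam) (η : ℝ),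
          ((η - lam * ξ / n : ℝ) : EReal) -
            ((1 / (n : ℝ) : ℝ) : EReal) * (∑ i, (lam : EReal) * fstar f ((η - ℓ i) / lam)) := by
  have hn₀ : n ≠ 0 := Nat.one_le_iff_ne_zero.1 hn
  obtain ⟨w, hw, hmin⟩ := exists_forall_le_Kf hlsc hf1 hn₀ hξ ℓ
  exact ⟨w, hw, hmin, le_antisymm (le_iSup_dualFun hconv hf1 hn₀ hξ hmin) (iSup_dualFun_le hn₀ hw)⟩
end
end

section
/- Fix λ > 0, η ∈ ℝ, and ℓ ∈ ℝⁿ, and suppose f is differentiable on (0,∞). If w ∈ ℝⁿ satisfies wᵢ > 0 and f'(n·wᵢ) = (ℓᵢ − η)/λ for every i, together with Σᵢ wᵢ = 1 and (1/n)·Σᵢ f(n·wᵢ) = ξ/n, then w maximizes the linear functional v ↦ Σᵢ vᵢ·ℓᵢ over K_f (this is the closed-form optimal reweighting w = f*'((ℓ − η)/λ) of CoinDICE). -/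
open Finset

noncomputable section

lemma tangent_le {f : ℝ → ℝ} (hconv : ConvexOn ℝ (Set.Ici 0) f)
    {x y d : ℝ} (hx : 0 < x) (hy : 0 ≤ y) (hd : HasDerivAt f d x) :
    f x + d * (y - x) ≤ f y := by
  rcases lt_trichotomy x y with h | h | h
  · have := hconv.le_slope_of_hasDerivAt (le_of_lt hx) hy h hd
    rw [slope_def_field, le_div_iff₀ (by linarith)] at this
    nlinarith
  · simp [h]
  · have := hconv.slope_le_of_hasDerivAt hy (le_of_lt hx) h hd
    rw [slope_def_field] at this
    have hxy : 0 < x - y := by linarith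
    rw [div_le_iff₀ hxy] at this
    nlinarith

/-- sufficiency of the CoinDICE closed-form reweighting.  If `w > 0`
satisfies the stationarity condition `f'(n·wᵢ) = (ℓᵢ − η)/λ` for all `i`, together with
normalization `Σᵢ wᵢ = 1` and the active divergence constraint
`(1/n)·Σᵢ f(n·wᵢ) = ξ/n`, then `w` maximizes `v ↦ Σᵢ vᵢ ℓᵢ` over `K_f`. -/
theorem stmt_11 (f : ℝ → ℝ) (hconv : ConvexOn ℝ (Set.Ici 0) f)
    (hlsc : LowerSemicontinuousOn f (Set.Ici 0)) (hf1 : f 1 = 0)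
    (n : ℕ) (hn : 1 ≤ n) (ξ : ℝ) (hξ : 0 < ξ) (ℓ : Fin n → ℝ)
    (lam η : ℝ) (hlam : 0 < lam)
    (f' : ℝ → ℝ) (hderiv : ∀ x : ℝ, 0 < x → HasDerivAt f (f' x) x)
    (w : Fin n → ℝ) (hwpos : ∀ i, 0 < w i)
    (hstat : ∀ i, f' ((n : ℝ) * w i) = (ℓ i - η) / lam)
    (hsum : ∑ i, w i = 1)
    (hactive : (1 / (n : ℝ)) * ∑ i, f ((n : ℝ) * w i) = ξ / n) :
    w ∈ Kf f n ξ ∧ ∀ v ∈ Kf f n ξ, ∑ i, v i * ℓ i ≤ ∑ i, w i * ℓ i := by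
  have hn0 : (0 : ℝ) < n := by exact_mod_cast hn
  constructor
  · exact ⟨fun i => (hwpos i).le, hsum, le_of_eq hactive⟩
  · rintro v ⟨hv0, hvsum, hvcon⟩
    -- tangent inequality at each coordinate
    have key : ∀ i, f ((n : ℝ) * w i) + ((ℓ i - η) / lam) * ((n : ℝ) * v i - (n : ℝ) * w i)
        ≤ f ((n : ℝ) * v i) := by
      intro i
      have hx : (0 : ℝ) < (n : ℝ) * w i := mul_pos hn0 (hwpos i)
      have := tangent_le hconv hx (mul_nonneg hn0.le (hv0 i)) (hderiv _ hx)
      rwa [hstat i] at this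
    have hs := Finset.sum_le_sum (s := Finset.univ) (fun i _ => key i)
    rw [Finset.sum_add_distrib] at hs
    have hSv : ∑ i, f ((n : ℝ) * v i) ≤ ξ := by
      have h := mul_le_mul_of_nonneg_left hvcon hn0.le
      rw [mul_div_cancel₀ _ hn0.ne'] at h
      calc ∑ i, f ((n : ℝ) * v i) = (n : ℝ) * (1 / n * ∑ i, f ((n : ℝ) * v i)) := by
            field_simp
        _ ≤ ξ := h
    have hSw : ∑ i, f ((n : ℝ) * w i) = ξ := by
      have h := congrArg (fun t => (n : ℝ) * t) hactive
      simp only [mul_div_cancel₀ _ hn0.ne'] at h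
      calc ∑ i, f ((n : ℝ) * w i) = (n : ℝ) * (1 / n * ∑ i, f ((n : ℝ) * w i)) := by
            field_simp
        _ = ξ := h
    have expand : ∑ i, ((ℓ i - η) / lam) * ((n : ℝ) * v i - (n : ℝ) * w i)
        = ((n : ℝ) / lam) * ((∑ i, v i * ℓ i) - (∑ i, w i * ℓ i)) := by
      have h1 : ∀ i, ((ℓ i - η) / lam) * ((n : ℝ) * v i - (n : ℝ) * w i)
          = ((n : ℝ) / lam) * (v i * ℓ i - w i * ℓ i)
            - ((n : ℝ) * η / lam) * (v i - w i) := by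
        intro i; field_simp
      rw [Finset.sum_congr rfl (fun i _ => h1 i), Finset.sum_sub_distrib,
        ← Finset.mul_sum, ← Finset.mul_sum, Finset.sum_sub_distrib,
        Finset.sum_sub_distrib, hvsum, hsum]
      ring
    have hle : ((n : ℝ) / lam) * ((∑ i, v i * ℓ i) - (∑ i, w i * ℓ i)) ≤ 0 := by
      rw [← expand]; linarith [hs, hSv, hSw]
    have hpos : (0 : ℝ) < (n : ℝ) / lam := by positivity
    nlinarith [hle, hpos]
end
end

section
/- The following hold: (i) max(√(ξ·s_n²/n) − M·ξ/n, 0) ≤ z̄ − min_{w ∈ K} Σᵢ wᵢ·zᵢ ≤ √(ξ·s_n²/n); and (ii) if in addition s_n² ≥ ξ·M²/n, then min_{w ∈ K} Σᵢ wᵢ·zᵢ = z̄ − √(ξ·s_n²/n). -/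
/-! Write `w = 1/n + δ`. Then `∑ δᵢ = 0`, the χ² constraint reads `∑ δᵢ² ≤ ξ/n²`, and
`∑ wᵢzᵢ - z̄ = ∑ δᵢ(zᵢ - z̄) ≥ -√(ξV)/n` by Cauchy–Schwarz, where `V = ∑ (zᵢ - z̄)² = n s_n²`.
Equality would need `δ ∝ -(z - z̄)`: the tilted weights `(1 - β(zᵢ - z̄))/n` lie in `K` as long as
`β²V ≤ ξ` and `βM ≤ 1`, and have value `z̄ - βV/n`. Taking `β = min(√(ξ/V), 1/M)` gives
`βV = min(√(ξV), V/M) ≥ √(ξV) - Mξ` by AM–GM, and `βV = √(ξV)` as soon as `ξM² ≤ V`. -/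

open Finset

noncomputable section

section ChiSqBall

variable {ι : Type*} [Fintype ι]

def empiricalMean (z : ι → ℝ) : ℝ := (∑ i, z i) / Fintype.card ι

def sumSqDev (z : ι → ℝ) : ℝ := ∑ i, (z i - empiricalMean z) ^ 2

variable (ι) in
def chiSqBall (ξ : ℝ) : Set (ι → ℝ) :=
  {w | (∀ i, 0 ≤ w i) ∧ ∑ i, w i = 1 ∧
    (1 / (Fintype.card ι : ℝ)) * ∑ i, ((Fintype.card ι : ℝ) * w i - 1) ^ 2 ≤ ξ / Fintype.card ι}

def chiSqMin (ξ : ℝ) (z : ι → ℝ) : ℝ :=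
  sInf {x | ∃ w ∈ chiSqBall ι ξ, x = ∑ i, w i * z i}

lemma sumSqDev_nonneg (z : ι → ℝ) : 0 ≤ sumSqDev z :=
  sum_nonneg fun _ _ ↦ sq_nonneg _

lemma card_mul_empiricalMean [Nonempty ι] (z : ι → ℝ) :
    Fintype.card ι * empiricalMean z = ∑ i, z i :=
  mul_div_cancel₀ _ (by positivity)

lemma empiricalMean_nonneg {z : ι → ℝ} (hz : ∀ i, 0 ≤ z i) : 0 ≤ empiricalMean z :=
  div_nonneg (sum_nonneg fun i _ ↦ hz i) (Nat.cast_nonneg _)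

lemma sumSqDev_eq [Nonempty ι] (z : ι → ℝ) :
    sumSqDev z = ∑ i, z i ^ 2 - Fintype.card ι * empiricalMean z ^ 2 := by
  have hsum := card_mul_empiricalMean z
  simp only [sumSqDev, sub_sq, sum_add_distrib, sum_sub_distrib, ← sum_mul, ← mul_sum, ← hsum]
  simp
  ring

lemma nonempty_of_sum_eq_one {w : ι → ℝ} (hw : ∑ i, w i = 1) : Nonempty ι :=
  univ_nonempty_iff.mp (nonempty_of_sum_ne_zero (hw ▸ one_ne_zero))

lemma sum_mul_eq_empiricalMean_add {w : ι → ℝ} (hw : ∑ i, w i = 1) (z : ι → ℝ) :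
    ∑ i, w i * z i =
      empiricalMean z + ∑ i, (w i - 1 / Fintype.card ι) * (z i - empiricalMean z) := by
  have := nonempty_of_sum_eq_one hw
  simp only [sub_mul, mul_sub, sum_sub_distrib, ← mul_sum, ← sum_mul, hw,
    ← card_mul_empiricalMean z]
  simp

lemma sum_sq_sub_le_of_mem_chiSqBall {ξ : ℝ} {w : ι → ℝ} (hw : w ∈ chiSqBall ι ξ) :
    ∑ i, (w i - 1 / Fintype.card ι) ^ 2 ≤ ξ / Fintype.card ι ^ 2 := by
  obtain ⟨-, hw1, hχ⟩ := hw
  have := nonempty_of_sum_eq_one hw1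
  have hN : (0 : ℝ) < Fintype.card ι := by positivity
  have hsq : ∀ i, ((Fintype.card ι : ℝ) * w i - 1) ^ 2
      = Fintype.card ι ^ 2 * (w i - 1 / Fintype.card ι) ^ 2 := fun i ↦ by
    field_simp
  have hχ' : ∑ i, ((Fintype.card ι : ℝ) * w i - 1) ^ 2 ≤ ξ := by
    have := mul_le_mul_of_nonneg_left hχ hN.le
    rwa [← mul_assoc, mul_one_div_cancel hN.ne', one_mul, mul_div_cancel₀ _ hN.ne'] at this
  simp only [hsq, ← mul_sum] at hχ'
  rwa [le_div_iff₀ (by positivity), mul_comm]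

lemma empiricalMean_sub_le_sum_mul {ξ : ℝ} {w : ι → ℝ} (hw : w ∈ chiSqBall ι ξ) (z : ι → ℝ) :
    empiricalMean z - √(ξ * sumSqDev z) / Fintype.card ι ≤ ∑ i, w i * z i := by
  set δ : ι → ℝ := fun i ↦ w i - 1 / Fintype.card ι
  have hCS : (∑ i, δ i * (z i - empiricalMean z)) ^ 2
      ≤ ξ / Fintype.card ι ^ 2 * sumSqDev z :=
    (sum_mul_sq_le_sq_mul_sq _ _ _).trans
      (mul_le_mul_of_nonneg_right (sum_sq_sub_le_of_mem_chiSqBall hw) (sumSqDev_nonneg z))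
  have hsqrt : √(ξ / Fintype.card ι ^ 2 * sumSqDev z) = √(ξ * sumSqDev z) / Fintype.card ι := by
    rw [div_mul_eq_mul_div, Real.sqrt_div' _ (by positivity), Real.sqrt_sq (by positivity)]
  have := neg_abs_le (∑ i, δ i * (z i - empiricalMean z))
  rw [sum_mul_eq_empiricalMean_add hw.2.1 z]
  linarith [hsqrt ▸ Real.abs_le_sqrt hCS]

def tiltedWeights (z : ι → ℝ) (β : ℝ) (i : ι) : ℝ :=
  (1 - β * (z i - empiricalMean z)) / Fintype.card ι

lemma sum_tiltedWeights [Nonempty ι] (z : ι → ℝ) (β : ℝ) : ∑ i, tiltedWeights z β i = 1 := by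
  simp only [tiltedWeights, ← sum_div, sum_sub_distrib, ← mul_sum, ← card_mul_empiricalMean z]
  simp

lemma tiltedWeights_mem_chiSqBall [Nonempty ι] {z : ι → ℝ} {β ξ : ℝ}
    (hβ : ∀ i, β * (z i - empiricalMean z) ≤ 1) (hβξ : β ^ 2 * sumSqDev z ≤ ξ) :
    tiltedWeights z β ∈ chiSqBall ι ξ := by
  refine ⟨fun i ↦ div_nonneg (sub_nonneg.mpr (hβ i)) (Nat.cast_nonneg _),
    sum_tiltedWeights z β, ?_⟩
  have hN : (Fintype.card ι : ℝ) ≠ 0 := by positivity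
  have hsq : ∀ i, ((Fintype.card ι : ℝ) * tiltedWeights z β i - 1) ^ 2
      = β ^ 2 * (z i - empiricalMean z) ^ 2 := fun i ↦ by
    unfold tiltedWeights
    field_simp
    ring
  rw [one_div_mul_eq_div]
  simp only [hsq, ← mul_sum]
  gcongr
  exact hβξ

lemma sum_tiltedWeights_mul [Nonempty ι] (z : ι → ℝ) (β : ℝ) :
    ∑ i, tiltedWeights z β i * z i = empiricalMean z - β * sumSqDev z / Fintype.card ι := by
  rw [sum_mul_eq_empiricalMean_add (sum_tiltedWeights z β)]
  have hN : (Fintype.card ι : ℝ) ≠ 0 := by positivity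
  have hdev : ∀ i, tiltedWeights z β i - 1 / Fintype.card ι
      = -(β / Fintype.card ι) * (z i - empiricalMean z) := fun i ↦ by
    unfold tiltedWeights
    field_simp
    ring
  simp only [hdev, mul_assoc, ← mul_sum, ← sq, sumSqDev]
  ring

lemma exists_mem_chiSqBall_sum_mul_eq [Nonempty ι] {z : ι → ℝ} {M ξ : ℝ} (hM : 0 < M)
    (hξ : 0 ≤ ξ) (hz : ∀ i, z i - empiricalMean z ≤ M) :
    ∃ w ∈ chiSqBall ι ξ, ∑ i, w i * z i =
      empiricalMean z - min √(ξ * sumSqDev z) (sumSqDev z / M) / Fintype.card ι := by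
  have hV := sumSqDev_nonneg z
  set V := sumSqDev z
  -- when `V = 0` the junk value `ξ / 0 = 0` makes `β = 0`, which is still the right choice
  set β := min √(ξ / V) (1 / M)
  have hβ : 0 ≤ β := le_min (Real.sqrt_nonneg _) (by positivity)
  have hβV : β * V = min √(ξ * V) (V / M) := by
    rw [min_mul_of_nonneg _ _ hV, Real.sqrt_div' _ hV, div_mul_eq_mul_div, mul_div_assoc,
      Real.div_sqrt, ← Real.sqrt_mul hξ, one_div_mul_eq_div]
  refine ⟨tiltedWeights z β, tiltedWeights_mem_chiSqBall (fun i ↦ ?_) ?_, ?_⟩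
  · calc β * (z i - empiricalMean z) ≤ β * M := mul_le_mul_of_nonneg_left (hz i) hβ
      _ ≤ 1 / M * M := mul_le_mul_of_nonneg_right (min_le_right _ _) hM.le
      _ = 1 := one_div_mul_cancel hM.ne'
  · change β ^ 2 * V ≤ ξ
    rcases hV.eq_or_lt with hV0 | hVpos
    · rwa [← hV0, mul_zero]
    · calc β ^ 2 * V ≤ ξ / V * V :=
            mul_le_mul_of_nonneg_right ((Real.le_sqrt hβ (by positivity)).mp (min_le_left _ _)) hV
        _ = ξ := div_mul_cancel₀ ξ hVpos.ne'
  · rw [sum_tiltedWeights_mul, hβV]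

lemma empiricalMean_sub_le_chiSqMin {ξ : ℝ} (hK : (chiSqBall ι ξ).Nonempty) (z : ι → ℝ) :
    empiricalMean z - √(ξ * sumSqDev z) / Fintype.card ι ≤ chiSqMin ξ z := by
  obtain ⟨w, hw⟩ := hK
  refine le_csInf ⟨_, w, hw, rfl⟩ ?_
  rintro _ ⟨w, hw, rfl⟩
  exact empiricalMean_sub_le_sum_mul hw z

lemma chiSqMin_le_sum_mul {ξ : ℝ} {w : ι → ℝ} (hw : w ∈ chiSqBall ι ξ) (z : ι → ℝ) :
    chiSqMin ξ z ≤ ∑ i, w i * z i := by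
  refine csInf_le ⟨empiricalMean z - √(ξ * sumSqDev z) / Fintype.card ι, ?_⟩ ⟨w, hw, rfl⟩
  rintro _ ⟨w, hw, rfl⟩
  exact empiricalMean_sub_le_sum_mul hw z

end ChiSqBall

lemma sqrt_mul_le_mul_add_div {M ξ V : ℝ} (hM : 0 < M) (hξ : 0 ≤ ξ) (hV : 0 ≤ V) :
    √(ξ * V) ≤ M * ξ + V / M := by
  refine Real.sqrt_le_iff.mpr ⟨by positivity, ?_⟩
  obtain ⟨t, ht, rfl⟩ : ∃ t, 0 ≤ t ∧ V = M * t := ⟨V / M, by positivity, by field_simp⟩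
  rw [mul_div_cancel_left₀ _ hM.ne']
  nlinarith [mul_nonneg (mul_nonneg hM.le hξ) ht, sq_nonneg (M * ξ), sq_nonneg t]

lemma sqrt_mul_le_div_of_mul_sq_le {M ξ V : ℝ} (hM : 0 < M) (hV : 0 ≤ V) (h : ξ * M ^ 2 ≤ V) :
    √(ξ * V) ≤ V / M := by
  refine Real.sqrt_le_iff.mpr ⟨by positivity, ?_⟩
  rw [div_pow, le_div_iff₀ (by positivity)]
  nlinarith

/-- variance representation of the lower confidence bound over the
χ²-divergence ball `K` around the uniform distribution. -/
theorem stmt_13 (n : ℕ) (hn : 1 ≤ n) (M ξ : ℝ) (hM : 0 < M) (hξ : 0 ≤ ξ)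
    (z : Fin n → ℝ) (hz : ∀ i, z i ∈ Set.Icc (0 : ℝ) M) :
    let zbar : ℝ := (1 / (n : ℝ)) * ∑ i, z i
    let s2 : ℝ := (1 / (n : ℝ)) * ∑ i, (z i) ^ 2 - zbar ^ 2
    let K : Set (Fin n → ℝ) := {w | (∀ i, 0 ≤ w i) ∧ ∑ i, w i = 1 ∧
      (1 / (n : ℝ)) * ∑ i, ((n : ℝ) * w i - 1) ^ 2 ≤ ξ / n}
    let m : ℝ := sInf {x : ℝ | ∃ w ∈ K, x = ∑ i, w i * z i}
    (max (Real.sqrt (ξ * s2 / n) - M * ξ / n) 0 ≤ zbar - m ∧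
      zbar - m ≤ Real.sqrt (ξ * s2 / n)) ∧
    (ξ * M ^ 2 / n ≤ s2 → m = zbar - Real.sqrt (ξ * s2 / n)) := by
  intro zbar s2 K m
  have : Nonempty (Fin n) := ⟨⟨0, hn⟩⟩
  have hn0 : (0 : ℝ) < n := by positivity
  have hzbar : zbar = empiricalMean z := by simp [zbar, empiricalMean, one_div_mul_eq_div]
  have hm : m = chiSqMin ξ z := by simp only [m, K, chiSqMin, chiSqBall, Fintype.card_fin]
  have hV := sumSqDev_nonneg z
  have hs2 : s2 = sumSqDev z / n := by
    simp only [s2]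
    rw [sumSqDev_eq, Fintype.card_fin, ← hzbar]
    field_simp
  have hsqrt : √(ξ * s2 / n) = √(ξ * sumSqDev z) / n := by
    rw [hs2, mul_div_assoc', div_div, ← sq, Real.sqrt_div' _ (sq_nonneg _), Real.sqrt_sq hn0.le]
  obtain ⟨w, hw, hval⟩ := exists_mem_chiSqBall_sum_mul_eq hM hξ fun i ↦
    (sub_le_self _ (empiricalMean_nonneg fun j ↦ (hz j).1)).trans (hz i).2
  have hlow := empiricalMean_sub_le_chiSqMin ⟨w, hw⟩ z
  have hupp := (chiSqMin_le_sum_mul hw z).trans_eq hval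
  rw [Fintype.card_fin] at hlow hupp
  rw [hsqrt, hm, hzbar]
  refine ⟨⟨max_le ?_ ?_, by linarith⟩, fun hs ↦ ?_⟩
  · have hgap : √(ξ * sumSqDev z) - M * ξ ≤ min √(ξ * sumSqDev z) (sumSqDev z / M) :=
      le_min (by linarith [mul_nonneg hM.le hξ]) (by linarith [sqrt_mul_le_mul_add_div hM hξ hV])
    have := div_le_div_of_nonneg_right hgap hn0.le
    rw [sub_div] at this
    linarith
  · have : 0 ≤ min √(ξ * sumSqDev z) (sumSqDev z / M) / n := by positivity
    linarith
  · rw [hs2, div_le_div_iff_of_pos_right hn0] at hs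
    rw [min_eq_left (sqrt_mul_le_div_of_mul_sq_le hM hV hs)] at hupp
    exact le_antisymm hupp hlow
end
end

section
/- For every continuous G : X×Y → ℝ, every sequence of continuous functions G_n : X×Y → ℝ converging uniformly to G, and every sequence of positive reals t_n → 0, one has (Ψ(t_n·G_n) − Ψ(0))/t_n → G(x*, y*) as n → ∞; in particular Ψ(0) = F(x*, y*) and the minimax value functional Ψ is Hadamard directionally differentiable at F with derivative G ↦ G(x*, y*). -/
open Filter

noncomputable section

/-- The minimax value `Ψ(H) = inf_y sup_x (F(x,y) + H(x,y))`. -/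
def minimaxVal {X Y : Type*} (F H : X × Y → ℝ) : ℝ :=
  ⨅ y : Y, ⨆ x : X, (F (x, y) + H (x, y))

/-- Hadamard directional differentiability of the minimax value functional
at `F` with a unique saddle point `(x*, y*)`: for every continuous `G`, uniformly
convergent continuous perturbations `G_n → G`, and positive `t_n → 0`,
`(Ψ(t_n·G_n) − Ψ(0))/t_n → G(x*, y*)`; in particular `Ψ(0) = F(x*, y*)`. -/
theorem stmt_18 {X Y : Type*}
    [MetricSpace X] [CompactSpace X] [Nonempty X]
    [MetricSpace Y] [CompactSpace Y] [Nonempty Y]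
    (F : X × Y → ℝ) (hF : Continuous F)
    (xs : X) (ys : Y)
    (hsaddle : ∀ x y, F (x, ys) ≤ F (xs, ys) ∧ F (xs, ys) ≤ F (xs, y))
    (hxuniq : ∀ x, x ≠ xs → F (x, ys) < F (xs, ys))
    (hyuniq : ∀ y, y ≠ ys → (⨆ x : X, F (x, ys)) < ⨆ x : X, F (x, y)) :
    minimaxVal F (fun _ => 0) = F (xs, ys) ∧
    ∀ (G : X × Y → ℝ), Continuous G →
      ∀ (Gn : ℕ → X × Y → ℝ), (∀ n, Continuous (Gn n)) →
        TendstoUniformly Gn G atTop →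
        ∀ (t : ℕ → ℝ), (∀ n, 0 < t n) → Tendsto t atTop (nhds 0) →
          Tendsto (fun n =>
              (minimaxVal F (fun z => t n * Gn n z) - minimaxVal F (fun _ => 0)) / t n)
            atTop (nhds (G (xs, ys))) := by
  classical
  have hFy : ∀ y : Y, Continuous fun x : X => F (x, y) := fun y =>
    hF.comp (continuous_id.prodMk continuous_const)
  have hbddF : ∀ y : Y, BddAbove (Set.range fun x : X => F (x, y)) := fun y =>
    (isCompact_range (hFy y)).bddAbove
  have hsup_ys : (⨆ x : X, F (x, ys)) = F (xs, ys) :=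
    le_antisymm (ciSup_le fun x => (hsaddle x ys).1) (le_ciSup (hbddF ys) xs)
  set φ : Y → ℝ := fun y => ⨆ x : X, F (x, y) with hφdef
  have hφ_ge : ∀ y, F (xs, ys) ≤ φ y := fun y =>
    le_trans (hsaddle xs y).2 (le_ciSup (hbddF y) xs)
  have hΨ0 : minimaxVal F (fun _ => 0) = F (xs, ys) := by
    have hbb : BddBelow (Set.range φ) := ⟨F (xs, ys), by rintro r ⟨y, rfl⟩; exact hφ_ge y⟩
    have : minimaxVal F (fun _ => 0) = ⨅ y : Y, φ y := by
      simp only [minimaxVal, add_zero, hφdef]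
    rw [this]
    refine le_antisymm ?_ (le_ciInf hφ_ge)
    exact le_of_le_of_eq (ciInf_le hbb ys) hsup_ys
  -- continuity of φ
  have hφcont : Continuous φ := by
    rw [Metric.continuous_iff]
    intro b ε hε
    obtain ⟨δ, hδ, hδε⟩ := Metric.uniformContinuous_iff.1
      (CompactSpace.uniformContinuous_of_continuous hF) (ε / 2) (by linarith)
    refine ⟨δ, hδ, fun a hab => ?_⟩
    have key : ∀ u v : Y, dist u v < δ → φ u ≤ φ v + ε / 2 := by
      intro u v huv
      refine ciSup_le fun x => ?_
      have hd : dist ((x, u) : X × Y) (x, v) < δ := by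
        simpa [Prod.dist_eq, dist_self, max_eq_right dist_nonneg] using huv
      have h1 := hδε hd
      rw [Real.dist_eq] at h1
      have h2 := abs_lt.1 h1
      have h3 : F (x, v) ≤ φ v := le_ciSup (hbddF v) x
      linarith [h2.1, h2.2]
    rw [Real.dist_eq, abs_sub_lt_iff]
    constructor
    · have := key a b hab; linarith
    · have := key b a (by rwa [dist_comm]); linarith
  refine ⟨hΨ0, ?_⟩
  intro G hG Gn hGn hGU t htpos ht0
  set g := G (xs, ys) with hg
  obtain ⟨z₀, -, hz₀⟩ := isCompact_univ.exists_isMaxOn Set.univ_nonempty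
    (hG.abs).continuousOn
  set B : ℝ := |G z₀| + 1 with hB
  have hGB : ∀ z, |G z| ≤ B - 1 := fun z => by
    have := hz₀ (Set.mem_univ z); simpa [hB] using this
  rw [Metric.tendsto_nhds]
  intro ε hε
  obtain ⟨δ₁, hδ₁, hGδ⟩ := Metric.continuous_iff.1 hG (xs, ys) (ε / 4) (by linarith)
  -- margin c₁ for x away from xs
  have hc₁ : ∃ c > 0, ∀ x : X, δ₁ ≤ dist x xs → F (x, ys) ≤ F (xs, ys) - c := by
    by_cases hA : {x : X | δ₁ ≤ dist x xs}.Nonempty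
    · have hcl : IsClosed {x : X | δ₁ ≤ dist x xs} :=
        isClosed_le continuous_const (continuous_id.dist continuous_const)
      obtain ⟨x₀, hx₀A, hx₀⟩ := hcl.isCompact.exists_isMaxOn hA (hFy ys).continuousOn
      have hx₀ne : x₀ ≠ xs := by
        intro h
        rw [h] at hx₀A
        simp only [Set.mem_setOf_eq, dist_self] at hx₀A
        linarith
      have hlt : F (x₀, ys) < F (xs, ys) := hxuniq x₀ hx₀ne
      exact ⟨F (xs, ys) - F (x₀, ys), by linarith, fun x hx => by
        have := hx₀ hx; simp only [Set.mem_setOf_eq] at this; linarith⟩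
    · exact ⟨1, one_pos, fun x hx => absurd ⟨x, hx⟩ hA⟩
  -- margin c₂ for y away from ys
  have hc₂ : ∃ c > 0, ∀ y : Y, δ₁ ≤ dist y ys → F (xs, ys) + c ≤ φ y := by
    by_cases hA : {y : Y | δ₁ ≤ dist y ys}.Nonempty
    · have hcl : IsClosed {y : Y | δ₁ ≤ dist y ys} :=
        isClosed_le continuous_const (continuous_id.dist continuous_const)
      obtain ⟨y₀, hy₀A, hy₀⟩ := hcl.isCompact.exists_isMinOn hA hφcont.continuousOn
      have hy₀ne : y₀ ≠ ys := by
        intro h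
        rw [h] at hy₀A
        simp only [Set.mem_setOf_eq, dist_self] at hy₀A
        linarith
      have hlt : F (xs, ys) < φ y₀ := by
        have := hyuniq y₀ hy₀ne; rwa [hsup_ys] at this
      exact ⟨φ y₀ - F (xs, ys), by linarith, fun y hy => by
        have := hy₀ hy; simp only [Set.mem_setOf_eq] at this; linarith⟩
    · exact ⟨1, one_pos, fun y hy => absurd ⟨y, hy⟩ hA⟩
  obtain ⟨c₁, hc₁pos, hc₁⟩ := hc₁
  obtain ⟨c₂, hc₂pos, hc₂⟩ := hc₂
  have hev1 : ∀ᶠ n in atTop, ∀ z, dist (G z) (Gn n z) < ε / 4 :=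
    Metric.tendstoUniformly_iff.1 hGU (ε / 4) (by linarith)
  have hev2 : ∀ᶠ n in atTop, ∀ z, dist (G z) (Gn n z) < 1 :=
    Metric.tendstoUniformly_iff.1 hGU 1 one_pos
  have hev3 : ∀ᶠ n in atTop, t n * (B + |g|) < min c₁ c₂ := by
    have h := ht0.mul_const (B + |g|)
    rw [zero_mul] at h
    exact h.eventually_lt_const (lt_min hc₁pos hc₂pos)
  filter_upwards [hev1, hev2, hev3] with n hn1 hn2 hn3
  have hτpos : 0 < t n := htpos n
  have hGnB : ∀ z, |Gn n z| ≤ B := fun z => by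
    have h1 := hn2 z
    rw [Real.dist_eq] at h1
    have h2 := hGB z
    have h3 := abs_sub_abs_le_abs_sub (Gn n z) (G z)
    rw [abs_sub_comm] at h3
    linarith
  have hcont : ∀ y : Y, Continuous fun x : X => F (x, y) + t n * Gn n (x, y) := fun y =>
    (hF.add (continuous_const.mul (hGn n))).comp (continuous_id.prodMk continuous_const)
  have hbdd : ∀ y : Y, BddAbove (Set.range fun x : X => F (x, y) + t n * Gn n (x, y)) :=
    fun y => (isCompact_range (hcont y)).bddAbove
  have hbb : BddBelow (Set.range fun y : Y =>
      ⨆ x : X, (F (x, y) + t n * Gn n (x, y))) := by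
    refine ⟨F (xs, ys) - t n * B, ?_⟩
    rintro r ⟨y, rfl⟩
    have h1 : F (xs, y) + t n * Gn n (xs, y) ≤
        ⨆ x : X, (F (x, y) + t n * Gn n (x, y)) := le_ciSup (hbdd y) xs
    have h2 : F (xs, ys) ≤ F (xs, y) := (hsaddle xs y).2
    have h3 := (abs_le.1 (hGnB (xs, y))).1
    have h4 : t n * (-B) ≤ t n * Gn n (xs, y) := mul_le_mul_of_nonneg_left h3 hτpos.le
    rw [mul_neg] at h4
    linarith
  -- upper bound
  have hupper : minimaxVal F (fun z => t n * Gn n z) ≤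
      F (xs, ys) + (t n * g + t n * (ε / 2)) := by
    have hsup : (⨆ x : X, (F (x, ys) + t n * Gn n (x, ys))) ≤
        F (xs, ys) + (t n * g + t n * (ε / 2)) := by
      refine ciSup_le fun x => ?_
      by_cases hx : dist x xs < δ₁
      · have hd : dist ((x, ys) : X × Y) (xs, ys) < δ₁ := by
          simpa [Prod.dist_eq, dist_self, max_eq_left dist_nonneg] using hx
        have h1 := hGδ _ hd
        have h2 := hn1 (x, ys)
        rw [Real.dist_eq] at h1 h2
        have a1 := abs_lt.1 h1
        have a2 := abs_lt.1 h2
        have h3 : Gn n (x, ys) ≤ g + ε / 2 := by linarith [a1.1, a1.2, a2.1, a2.2]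
        have h4 : F (x, ys) ≤ F (xs, ys) := (hsaddle x ys).1
        have h5 : t n * Gn n (x, ys) ≤ t n * (g + ε / 2) :=
          mul_le_mul_of_nonneg_left h3 hτpos.le
        nlinarith
      · push_neg at hx
        have h4 := hc₁ x hx
        have h5 : t n * Gn n (x, ys) ≤ t n * B :=
          mul_le_mul_of_nonneg_left (le_trans (le_abs_self _) (hGnB _)) hτpos.le
        have h6 : t n * (B + |g|) < c₁ := lt_of_lt_of_le hn3 (min_le_left _ _)
        have h7 : t n * (-|g|) ≤ t n * g :=
          mul_le_mul_of_nonneg_left (neg_abs_le g) hτpos.le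
        have h8 : 0 ≤ t n * (ε / 2) := mul_nonneg hτpos.le (by linarith)
        nlinarith [mul_add (t n) B |g|]
    calc minimaxVal F (fun z => t n * Gn n z)
        ≤ ⨆ x : X, (F (x, ys) + t n * Gn n (x, ys)) := ciInf_le hbb ys
      _ ≤ _ := hsup
  -- lower bound
  have hlower : F (xs, ys) + (t n * g - t n * (ε / 2)) ≤
      minimaxVal F (fun z => t n * Gn n z) := by
    refine le_ciInf fun y => ?_
    by_cases hy : dist y ys < δ₁
    · have hd : dist ((xs, y) : X × Y) (xs, ys) < δ₁ := by
        simpa [Prod.dist_eq, dist_self, max_eq_right dist_nonneg] using hy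
      have h1 := hGδ _ hd
      have h2 := hn1 (xs, y)
      rw [Real.dist_eq] at h1 h2
      have a1 := abs_lt.1 h1
      have a2 := abs_lt.1 h2
      have h3 : g - ε / 2 ≤ Gn n (xs, y) := by linarith [a1.1, a1.2, a2.1, a2.2]
      have h4 : F (xs, ys) ≤ F (xs, y) := (hsaddle xs y).2
      have h5 : t n * (g - ε / 2) ≤ t n * Gn n (xs, y) :=
        mul_le_mul_of_nonneg_left h3 hτpos.le
      have h6 : F (xs, y) + t n * Gn n (xs, y) ≤
          ⨆ x : X, (F (x, y) + t n * Gn n (x, y)) := le_ciSup (hbdd y) xs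
      nlinarith
    · push_neg at hy
      have h4 := hc₂ y hy
      have h5 : φ y ≤ (⨆ x : X, (F (x, y) + t n * Gn n (x, y))) + t n * B := by
        refine ciSup_le fun x => ?_
        have h6 : F (x, y) + t n * Gn n (x, y) ≤
            ⨆ x : X, (F (x, y) + t n * Gn n (x, y)) := le_ciSup (hbdd y) x
        have h7 := (abs_le.1 (hGnB (x, y))).1
        have h8 : t n * (-B) ≤ t n * Gn n (x, y) := mul_le_mul_of_nonneg_left h7 hτpos.le
        rw [mul_neg] at h8
        linarith
      have h8 : t n * (B + |g|) < c₂ := lt_of_lt_of_le hn3 (min_le_right _ _)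
      have h9 : t n * g ≤ t n * |g| := mul_le_mul_of_nonneg_left (le_abs_self g) hτpos.le
      have h10 : 0 ≤ t n * (ε / 2) := mul_nonneg hτpos.le (by linarith)
      nlinarith [mul_add (t n) B |g|]
  -- conclude
  rw [hΨ0, Real.dist_eq, abs_sub_lt_iff]
  have hd1 : (minimaxVal F (fun z => t n * Gn n z) - F (xs, ys)) / t n ≤ g + ε / 2 := by
    rw [div_le_iff₀ hτpos]
    nlinarith
  have hd2 : g - ε / 2 ≤ (minimaxVal F (fun z => t n * Gn n z) - F (xs, ys)) / t n := by
    rw [le_div_iff₀ hτpos]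
    nlinarith
  constructor <;> linarith
end
end
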